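/- arXiv:1310.4112 — 5 statements merged into one kernel-verified Lean document; each statement's English description precedes it below -/
import Mathlib

section
/- For all 1 ≤ a < b ≤ n there exists a unique ℚ-linear map Δ_{ab} : E_n → E_n such that Δ_{ab}(1) = 0; Δ_{ab}(x_{ij}) = 1 if (i,j) = (a,b), Δ_{ab}(x_{ij}) = −1 if (i,j) = (b,a), and Δ_{ab}(x_{ij}) = 0 otherwise; and Δ_{ab}(PQ) = Δ_{ab}(P)·Q + σ_{ab}(P)·Δ_{ab}(Q) for all P, Q ∈ E_n, where σ_{ab} denotes the algebra automorphism of E_n induced by the transposition (a b) (sending x_{ij} ↦ x_{(ab)(i),(ab)(j)}). Moreover, the operators Δ_{ab} satisfy the defining relations of E_n: Δ_{ab}∘Δ_{ab} = 0; Δ_{ab}∘Δ_{cd} = Δ_{cd}∘Δ_{ab} for distinct a,b,c,d; and Δ_{ab}∘Δ_{bc} + Δ_{bc}∘Δ_{ca} + Δ_{ca}∘Δ_{ab} = 0 for distinct a,b,c (where Δ_{ba} := −Δ_{ab}). -/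
open scoped TensorProduct

namespace FK

/-- Defining relations of the Fomin–Kirillov algebra `E n`, with generators indexed by
ordered pairs `(i, j)`; we also impose `x_{ii} = 0` and the antisymmetry `x_{ji} = -x_{ij}`,
so that the generators of the algebra are the `x_{ij}` for `i < j`. -/
inductive Rel (n : ℕ) : FreeAlgebra ℚ (Fin n × Fin n) → FreeAlgebra ℚ (Fin n × Fin n) → Prop
  | diag (i : Fin n) : Rel n (FreeAlgebra.ι ℚ (i, i)) 0
  | antisymm (i j : Fin n) (hij : i ≠ j) :
      Rel n (FreeAlgebra.ι ℚ (j, i)) (-FreeAlgebra.ι ℚ (i, j))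
  | square (i j : Fin n) (hij : i ≠ j) :
      Rel n (FreeAlgebra.ι ℚ (i, j) * FreeAlgebra.ι ℚ (i, j)) 0
  | comm (i j k l : Fin n) (h : List.Nodup [i, j, k, l]) :
      Rel n (FreeAlgebra.ι ℚ (i, j) * FreeAlgebra.ι ℚ (k, l))
        (FreeAlgebra.ι ℚ (k, l) * FreeAlgebra.ι ℚ (i, j))
  | cyclic (i j k : Fin n) (h : List.Nodup [i, j, k]) :
      Rel n (FreeAlgebra.ι ℚ (i, j) * FreeAlgebra.ι ℚ (j, k)
        + FreeAlgebra.ι ℚ (j, k) * FreeAlgebra.ι ℚ (k, i)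
        + FreeAlgebra.ι ℚ (k, i) * FreeAlgebra.ι ℚ (i, j)) 0

/-- The Fomin–Kirillov algebra `E n`. -/
abbrev E (n : ℕ) : Type := RingQuot (Rel n)

/-- The generator `x_{ij}` of `E n`. -/
noncomputable def x (n : ℕ) (i j : Fin n) : E n :=
  RingQuot.mkAlgHom ℚ (Rel n) (FreeAlgebra.ι ℚ (i, j))

/-- The product of generators `x_{i₁j₁} ⋯ x_{i_d j_d}` given by a list of pairs. -/
noncomputable def word (n : ℕ) (l : List (Fin n × Fin n)) : E n :=
  (l.map fun p => x n p.1 p.2).prod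

/-- The degree-`d` component of `E n`: the span of products of `d` generators. -/
def degSpan (n : ℕ) (d : ℕ) : Submodule ℚ (E n) :=
  Submodule.span ℚ {y | ∃ l : List (Fin n × Fin n),
    (∀ p ∈ l, p.1 ≠ p.2) ∧ l.length = d ∧ y = word n l}

/-- The Fomin–Kirillov algebra of a graph `G`: the subalgebra of `E n` generated by the
`x_{ij}` with `{i,j}` an edge of `G`. -/
def EG (n : ℕ) (G : SimpleGraph (Fin n)) : Subalgebra ℚ (E n) :=
  Algebra.adjoin ℚ {y | ∃ i j : Fin n, G.Adj i j ∧ y = x n i j}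

/-- The degree-`d` component `E_G^d = E_G ∩ E_n^d`. -/
def EGdeg (n : ℕ) (G : SimpleGraph (Fin n)) (d : ℕ) : Submodule ℚ (E n) :=
  (EG n G).toSubmodule ⊓ degSpan n d

/-- The positive-degree part `E_G⁺` of `E_G`. -/
def EGplus (n : ℕ) (G : SimpleGraph (Fin n)) : Submodule ℚ (E n) :=
  ⨆ d : ℕ, ⨆ _ : 1 ≤ d, EGdeg n G d


/-- The defining properties of the operator `Δ_{ab} : E n → E n` (relative to the
algebra automorphism `σ` induced by the transposition `(a b)`): it kills `1`, takes the
prescribed values on generators, and satisfies the twisted Leibniz rule. -/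
def IsDelta (n : ℕ) (σ : E n →ₐ[ℚ] E n) (a b : Fin n) (D : E n →ₗ[ℚ] E n) : Prop :=
  D 1 = 0 ∧
  (∀ i j : Fin n, i ≠ j →
    D (x n i j) = if i = a ∧ j = b then 1 else if i = b ∧ j = a then -1 else 0) ∧
  (∀ P Q : E n, D (P * Q) = D P * Q + σ P * D Q)

namespace Aux

variable {n : ℕ}

lemma x_diag (i : Fin n) : x n i i = 0 := by
  simpa [x] using RingQuot.mkAlgHom_rel ℚ (Rel.diag i)

lemma x_anti (i j : Fin n) : x n j i = - x n i j := by
  by_cases h : i = j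
  · subst h; simp [x_diag]
  · simpa [x] using RingQuot.mkAlgHom_rel ℚ (Rel.antisymm i j h)

lemma x_sq (i j : Fin n) : x n i j * x n i j = 0 := by
  by_cases h : i = j
  · subst h; simp [x_diag]
  · simpa [x, map_mul] using RingQuot.mkAlgHom_rel ℚ (Rel.square i j h)

lemma x_comm {i j k l : Fin n} (h : List.Nodup [i, j, k, l]) :
    x n i j * x n k l = x n k l * x n i j := by
  simpa [x, map_mul] using RingQuot.mkAlgHom_rel ℚ (Rel.comm i j k l h)

lemma x_cyclic {i j k : Fin n} (h : List.Nodup [i, j, k]) :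
    x n i j * x n j k + x n j k * x n k i + x n k i * x n i j = 0 := by
  simpa [x, map_mul, map_add] using RingQuot.mkAlgHom_rel ℚ (Rel.cyclic i j k h)

lemma adjoin_x :
    Algebra.adjoin ℚ (Set.range fun p : Fin n × Fin n => x n p.1 p.2) = ⊤ := by
  rw [eq_top_iff]
  rintro P -
  obtain ⟨z, rfl⟩ := RingQuot.mkAlgHom_surjective ℚ (Rel n) P
  induction z using FreeAlgebra.induction with
  | grade0 r => simpa using Subalgebra.algebraMap_mem _ r
  | grade1 p => exact Algebra.subset_adjoin ⟨p, by simp [x]⟩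
  | mul u v hu hv => rw [map_mul]; exact mul_mem hu hv
  | add u v hu hv => rw [map_add]; exact add_mem hu hv

lemma algHom_ext {f g : E n →ₐ[ℚ] E n} (h : ∀ i j, f (x n i j) = g (x n i j)) :
    f = g := by
  apply AlgHom.ext; intro P
  have hP : P ∈ Algebra.adjoin ℚ (Set.range fun p : Fin n × Fin n => x n p.1 p.2) := by
    rw [adjoin_x]; trivial
  induction hP using Algebra.adjoin_induction with
  | mem y hy => obtain ⟨p, rfl⟩ := hy; exact h p.1 p.2
  | algebraMap r => simp
  | add _ _ _ _ h1 h2 => simp [h1, h2]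
  | mul _ _ _ _ h1 h2 => simp [h1, h2]

/-- A twisted derivation vanishing on generators vanishes. -/
lemma vanish (τ : E n →ₐ[ℚ] E n) (K : E n →ₗ[ℚ] E n) (h1 : K 1 = 0)
    (hx : ∀ i j : Fin n, K (x n i j) = 0)
    (hm : ∀ P Q : E n, K (P * Q) = K P * Q + τ P * K Q) : K = 0 := by
  apply LinearMap.ext; intro P
  show K P = 0
  have hP : P ∈ Algebra.adjoin ℚ (Set.range fun p : Fin n × Fin n => x n p.1 p.2) := by
    rw [adjoin_x]; trivial
  induction hP using Algebra.adjoin_induction with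
  | mem y hy => obtain ⟨p, rfl⟩ := hy; exact hx p.1 p.2
  | algebraMap r =>
      have : (algebraMap ℚ (E n)) r = r • (1 : E n) := by
        rw [Algebra.algebraMap_eq_smul_one]
      rw [this, map_smul, h1, smul_zero]
  | add _ _ _ _ h1' h2' => simp [map_add, h1', h2']
  | mul u v _ _ h1' h2' => rw [hm, h1', h2']; simp

lemma swap_natural {α : Type*} [DecidableEq α] (a b y z u : α) :
    Equiv.swap a b (Equiv.swap y z u)
      = Equiv.swap (Equiv.swap a b y) (Equiv.swap a b z) (Equiv.swap a b u) := by
  have h := Equiv.swap_apply_apply (Equiv.swap a b) y z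
  have := congrArg (fun e : Equiv.Perm α => e (Equiv.swap a b u)) h
  simpa [Equiv.Perm.mul_apply, Equiv.swap_apply_self] using this.symm


section Construction

variable (a b : Fin n) (σab : E n →ₐ[ℚ] E n)

/-- Scalar value of the operator on the generator `x_{ij}`. -/
def dq (i j : Fin n) : ℚ :=
  if i = a ∧ j = b then 1 else if i = b ∧ j = a then -1 else 0

/-- Value of the matrix representation on a generator. -/
noncomputable def gen (p : Fin n × Fin n) : Matrix (Fin 2) (Fin 2) (E n) :=
  !![σab (x n p.1 p.2), algebraMap ℚ (E n) (dq a b p.1 p.2); 0, x n p.1 p.2]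

lemma dq_diag (hab : a ≠ b) (i : Fin n) : dq a b i i = 0 := by
  unfold dq
  split_ifs with h1 h2
  · exact absurd (h1.1.symm.trans h1.2) hab
  · exact absurd (h2.1.symm.trans h2.2) (Ne.symm hab)
  · rfl

lemma dq_miss {i j : Fin n} (h : ¬((i = a ∧ j = b) ∨ (i = b ∧ j = a))) :
    dq a b i j = 0 := by
  unfold dq
  split_ifs with h1 h2
  · exact absurd (Or.inl h1) h
  · exact absurd (Or.inr h2) h
  · rfl

lemma dq_hit_or (i j : Fin n) :
    ((i = a ∧ j = b) ∨ (i = b ∧ j = a)) ∨ dq a b i j = 0 := by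
  by_cases h : (i = a ∧ j = b) ∨ (i = b ∧ j = a)
  · exact Or.inl h
  · exact Or.inr (dq_miss a b h)

lemma swap_of_hit {i j : Fin n} (h : (i = a ∧ j = b) ∨ (i = b ∧ j = a)) :
    Equiv.swap a b i = j ∧ Equiv.swap a b j = i := by
  rcases h with ⟨rfl, rfl⟩ | ⟨rfl, rfl⟩ <;>
    simp [Equiv.swap_apply_left, Equiv.swap_apply_right]

lemma swap_of_miss {t : Fin n} (h1 : t ≠ a) (h2 : t ≠ b) :
    Equiv.swap a b t = t := Equiv.swap_apply_of_ne_of_ne h1 h2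

lemma dq_anti (hab : a ≠ b) (i j : Fin n) : dq a b j i = - dq a b i j := by
  rcases dq_hit_or a b i j with (⟨rfl, rfl⟩ | ⟨rfl, rfl⟩) | h0
  · simp [dq, hab, Ne.symm hab]
  · simp [dq, hab, Ne.symm hab]
  · have hm : ¬((i = a ∧ j = b) ∨ (i = b ∧ j = a)) := by
      intro hc
      rcases hc with ⟨rfl, rfl⟩ | ⟨rfl, rfl⟩ <;> simp [dq, hab, Ne.symm hab] at h0
    rw [h0, neg_zero, dq_miss a b (by tauto)]

lemma sx_of_hit (hs : ∀ i j : Fin n, σab (x n i j)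
      = x n (Equiv.swap a b i) (Equiv.swap a b j))
    {i j : Fin n} (h : (i = a ∧ j = b) ∨ (i = b ∧ j = a)) :
    σab (x n i j) = - x n i j := by
  rw [hs]
  obtain ⟨h1, h2⟩ := swap_of_hit a b h
  rw [h1, h2, x_anti]

lemma mulcancel (u v : E n) : u * v + -u * v = 0 := by
  rw [neg_mul u v, add_neg_cancel]

lemma mulcancel' (u v : E n) : -u * v + u * v = 0 := by
  rw [neg_mul u v, neg_add_cancel]

lemma e00 {R : Type*} (p q r s : R) : !![p, q; r, s] 0 0 = p := rfl
lemma e01 {R : Type*} (p q r s : R) : !![p, q; r, s] 0 1 = q := rfl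
lemma e10 {R : Type*} (p q r s : R) : !![p, q; r, s] 1 0 = r := rfl
lemma e11 {R : Type*} (p q r s : R) : !![p, q; r, s] 1 1 = s := rfl

lemma not_hit_right {k t : Fin n} (hka : k ≠ a) (hkb : k ≠ b) :
    ¬((t = a ∧ k = b) ∨ (t = b ∧ k = a)) := by
  rintro (⟨_, h2⟩ | ⟨_, h2⟩)
  exacts [hkb h2, hka h2]

lemma not_hit_left {k t : Fin n} (hka : k ≠ a) (hkb : k ≠ b) :
    ¬((k = a ∧ t = b) ∨ (k = b ∧ t = a)) := by
  rintro (⟨h1, _⟩ | ⟨h1, _⟩)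
  exacts [hka h1, hkb h1]

lemma ne_ab_of_hit {i j k : Fin n} (h : (i = a ∧ j = b) ∨ (i = b ∧ j = a))
    (hki : k ≠ i) (hkj : k ≠ j) : k ≠ a ∧ k ≠ b := by
  rcases h with ⟨rfl, rfl⟩ | ⟨rfl, rfl⟩ <;> exact ⟨by assumption, by assumption⟩

lemma phi_rel (hab : a ≠ b)
    (hs : ∀ i j : Fin n, σab (x n i j) = x n (Equiv.swap a b i) (Equiv.swap a b j)) :
    ∀ {u v : FreeAlgebra ℚ (Fin n × Fin n)}, Rel n u v →
    (FreeAlgebra.lift ℚ (gen a b σab)) u = (FreeAlgebra.lift ℚ (gen a b σab)) v := by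
  intro u v h
  induction h with
  | diag i =>
      simp only [FreeAlgebra.lift_ι_apply, map_zero, gen]
      ext i' j'
      fin_cases i' <;> fin_cases j' <;>
        simp only [Fin.mk_zero, Fin.mk_one, Fin.isValue, e00, e01, e10, e11,
          Matrix.zero_apply] <;>
        simp [x_diag, dq_diag a b hab, hs]
  | antisymm i j hij =>
      simp only [FreeAlgebra.lift_ι_apply, map_neg, gen]
      ext i' j'
      fin_cases i' <;> fin_cases j' <;>
        simp only [Fin.mk_zero, Fin.mk_one, Fin.isValue, Matrix.neg_apply, e00, e01, e10, e11]
      · rw [x_anti i j, map_neg]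
      · rw [dq_anti a b hab, map_neg]
      · rw [neg_zero]
      · exact x_anti i j
  | square i j hij =>
      simp only [map_mul, FreeAlgebra.lift_ι_apply, map_zero, gen]
      ext i' j'
      fin_cases i' <;> fin_cases j' <;>
        simp only [Fin.mk_zero, Fin.mk_one, Fin.isValue, Matrix.mul_apply, Fin.sum_univ_two,
          e00, e01, e10, e11, Matrix.zero_apply]
      · simp [hs, x_sq]
      · rcases dq_hit_or a b i j with h | h
        · rw [sx_of_hit a b σab hs h, Algebra.commutes]
          exact mulcancel' _ _
        · simp [h]
      · simp
      · simp [x_sq]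
  | comm i j k l hnd =>
      have hne : i ≠ j ∧ (i ≠ k ∧ i ≠ l) ∧ j ≠ k ∧ j ≠ l ∧ k ≠ l := by
        simpa [List.nodup_cons, not_or, and_assoc] using hnd
      obtain ⟨hij, ⟨hik, hil⟩, hjk, hjl, hkl⟩ := hne
      have hnd' : List.Nodup [Equiv.swap a b i, Equiv.swap a b j,
          Equiv.swap a b k, Equiv.swap a b l] := by
        simpa using hnd.map (Equiv.swap a b).injective
      simp only [map_mul, FreeAlgebra.lift_ι_apply, gen]
      ext i' j'
      fin_cases i' <;> fin_cases j' <;>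
        simp only [Fin.mk_zero, Fin.mk_one, Fin.isValue, Matrix.mul_apply, Fin.sum_univ_two,
          e00, e01, e10, e11]
      · simp only [mul_zero, add_zero, hs]
        exact x_comm hnd'
      · rcases dq_hit_or a b i j with h | h
        · obtain ⟨hka, hkb⟩ := ne_ab_of_hit a b h hik.symm hjk.symm
          obtain ⟨hla, hlb⟩ := ne_ab_of_hit a b h hil.symm hjl.symm
          rw [dq_miss a b (not_hit_left a b hka hkb), map_zero, mul_zero, zero_add,
            zero_mul, add_zero, hs k l, swap_of_miss a b hka hkb, swap_of_miss a b hla hlb,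
            Algebra.commutes]
        · rcases dq_hit_or a b k l with h2 | h2
          · obtain ⟨hia, hib⟩ := ne_ab_of_hit a b h2 hik hil
            obtain ⟨hja, hjb⟩ := ne_ab_of_hit a b h2 hjk hjl
            rw [h]
            simp only [map_zero, mul_zero, zero_mul, add_zero, zero_add]
            rw [hs i j, swap_of_miss a b hia hib, swap_of_miss a b hja hjb,
              Algebra.commutes]
          · simp [h, h2]
      · simp
      · simp only [zero_mul, zero_add]
        exact x_comm hnd
  | cyclic i j k hnd =>
      have hne : i ≠ j ∧ i ≠ k ∧ j ≠ k := by
        simpa [List.nodup_cons, not_or, and_assoc] using hnd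
      obtain ⟨hij, hik, hjk⟩ := hne
      have hnd' : List.Nodup [Equiv.swap a b i, Equiv.swap a b j, Equiv.swap a b k] := by
        simpa using hnd.map (Equiv.swap a b).injective
      simp only [map_add, map_mul, map_zero, FreeAlgebra.lift_ι_apply, gen]
      ext i' j'
      fin_cases i' <;> fin_cases j' <;>
        simp only [Fin.mk_zero, Fin.mk_one, Fin.isValue, Matrix.mul_apply, Fin.sum_univ_two,
          Matrix.add_apply, Matrix.zero_apply, e00, e01, e10, e11]
      · simp only [mul_zero, add_zero, hs]
        exact x_cyclic hnd'
      · -- middle entry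
        rcases dq_hit_or a b i j with h | h
        · obtain ⟨hka, hkb⟩ := ne_ab_of_hit a b h hik.symm hjk.symm
          rw [dq_miss a b (not_hit_right a b hka hkb), dq_miss a b (not_hit_left a b hka hkb)]
          simp only [map_zero, mul_zero, zero_mul, add_zero, zero_add]
          rw [hs k i, swap_of_miss a b hka hkb, (swap_of_hit a b h).1, x_anti j k,
            Algebra.commutes]
          first
            | exact mulcancel _ _
            | exact mulcancel' _ _
        · rcases dq_hit_or a b j k with h2 | h2
          · obtain ⟨hia, hib⟩ := ne_ab_of_hit a b h2 hij hik
            rw [h, dq_miss a b (not_hit_right a b hia hib)]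
            simp only [map_zero, mul_zero, zero_mul, add_zero, zero_add]
            rw [hs i j, swap_of_miss a b hia hib, (swap_of_hit a b h2).1, x_anti k i,
              Algebra.commutes]
            first
            | exact mulcancel _ _
            | exact mulcancel' _ _
          · rcases dq_hit_or a b k i with h3 | h3
            · obtain ⟨hja, hjb⟩ := ne_ab_of_hit a b h3 hjk hij.symm
              rw [h, h2]
              simp only [map_zero, mul_zero, zero_mul, add_zero, zero_add]
              rw [hs j k, swap_of_miss a b hja hjb, (swap_of_hit a b h3).1, x_anti i j,
                Algebra.commutes]
              first
            | exact mulcancel _ _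
            | exact mulcancel' _ _
            · simp [h, h2, h3]
      · simp
      · simp only [zero_mul, zero_add]
        exact x_cyclic hnd

/-- The matrix representation of `E n` built from `gen`. -/
noncomputable def phi (hab : a ≠ b)
    (hs : ∀ i j : Fin n, σab (x n i j) = x n (Equiv.swap a b i) (Equiv.swap a b j)) :
    E n →ₐ[ℚ] Matrix (Fin 2) (Fin 2) (E n) :=
  RingQuot.liftAlgHom ℚ ⟨FreeAlgebra.lift ℚ (gen a b σab), fun {_ _} h => phi_rel a b σab hab hs h⟩

lemma phi_x (hab : a ≠ b)
    (hs : ∀ i j : Fin n, σab (x n i j) = x n (Equiv.swap a b i) (Equiv.swap a b j))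
    (i j : Fin n) :
    phi a b σab hab hs (x n i j) = gen a b σab (i, j) := by
  rw [x, phi, RingQuot.liftAlgHom_mkAlgHom_apply, FreeAlgebra.lift_ι_apply]

lemma phi_tri (hab : a ≠ b)
    (hs : ∀ i j : Fin n, σab (x n i j) = x n (Equiv.swap a b i) (Equiv.swap a b j))
    (P : E n) :
    phi a b σab hab hs P 1 0 = 0 ∧ phi a b σab hab hs P 0 0 = σab P ∧
      phi a b σab hab hs P 1 1 = P := by
  have hP : P ∈ Algebra.adjoin ℚ (Set.range fun p : Fin n × Fin n => x n p.1 p.2) := by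
    rw [adjoin_x]; trivial
  induction hP using Algebra.adjoin_induction with
  | mem y hy =>
      obtain ⟨p, rfl⟩ := hy
      rw [phi_x a b σab hab hs]
      exact ⟨rfl, rfl, rfl⟩
  | algebraMap r =>
      refine ⟨?_, ?_, ?_⟩ <;>
        simp [Matrix.algebraMap_matrix_apply, AlgHom.commutes]
  | add u w hu hw h1 h2 =>
      refine ⟨?_, ?_, ?_⟩ <;>
        simp [map_add, Matrix.add_apply, h1.1, h1.2.1, h1.2.2, h2.1, h2.2.1, h2.2.2]
  | mul u w hu hw h1 h2 =>
      rw [map_mul, map_mul]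
      refine ⟨?_, ?_, ?_⟩ <;>
        simp only [Matrix.mul_apply, Fin.sum_univ_two, h1.1, h1.2.1, h1.2.2,
          h2.1, h2.2.1, h2.2.2, zero_mul, mul_zero, add_zero, zero_add]

/-- The operator `Δ_{ab}` as the `(0,1)` entry of the matrix representation. -/
noncomputable def delta (hab : a ≠ b)
    (hs : ∀ i j : Fin n, σab (x n i j) = x n (Equiv.swap a b i) (Equiv.swap a b j)) :
    E n →ₗ[ℚ] E n where
  toFun P := phi a b σab hab hs P 0 1
  map_add' u w := by simp only [map_add, Matrix.add_apply]
  map_smul' c u := by simp only [map_smul, Matrix.smul_apply, RingHom.id_apply]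

lemma delta_isDelta (hab : a ≠ b)
    (hs : ∀ i j : Fin n, σab (x n i j) = x n (Equiv.swap a b i) (Equiv.swap a b j)) :
    IsDelta n σab a b (delta a b σab hab hs) := by
  refine ⟨?_, ?_, ?_⟩
  · show phi a b σab hab hs 1 0 1 = 0
    rw [map_one, Matrix.one_apply_ne (by decide)]
  · intro i j hij
    show phi a b σab hab hs (x n i j) 0 1 = _
    rw [phi_x a b σab hab hs, gen, e01, dq]
    split_ifs with h1 h2 <;> simp
  · intro P Q
    show phi a b σab hab hs (P * Q) 0 1 = _
    rw [map_mul, Matrix.mul_apply, Fin.sum_univ_two,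
      (phi_tri a b σab hab hs P).2.1, (phi_tri a b σab hab hs Q).2.2]
    rw [add_comm]
    rfl

end Construction

section Part2

variable (σ : Fin n → Fin n → (E n →ₐ[ℚ] E n))
variable (hσ : ∀ a b i j : Fin n,
  σ a b (x n i j) = x n (Equiv.swap a b i) (Equiv.swap a b j))

/-- Uniqueness of operators satisfying `IsDelta`. -/
lemma isDelta_unique (a b : Fin n) (hab : a ≠ b) (τ : E n →ₐ[ℚ] E n)
    {D₁ D₂ : E n →ₗ[ℚ] E n} (h₁ : IsDelta n τ a b D₁) (h₂ : IsDelta n τ a b D₂) :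
    D₁ = D₂ := by
  rw [← sub_eq_zero]
  apply vanish τ
  · simp only [LinearMap.sub_apply, h₁.1, h₂.1, sub_zero]
  · intro i j
    by_cases hij : i = j
    · subst hij
      simp only [LinearMap.sub_apply, x_diag, map_zero, sub_zero]
    · simp only [LinearMap.sub_apply, h₁.2.1 i j hij, h₂.2.1 i j hij, sub_self]
  · intro P Q
    simp only [LinearMap.sub_apply, h₁.2.2, h₂.2.2]
    rw [sub_mul, mul_sub]
    abel

lemma isDelta_x_val {τ : E n →ₐ[ℚ] E n} {a b : Fin n} {D : E n →ₗ[ℚ] E n}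
    (h : IsDelta n τ a b D) (hab : a ≠ b) (i j : Fin n) :
    D (x n i j) = if i = a ∧ j = b then 1 else if i = b ∧ j = a then -1 else 0 := by
  by_cases hij : i = j
  · subst hij
    rw [x_diag, map_zero, if_neg (fun hc => hab (hc.1.symm.trans hc.2)),
      if_neg (fun hc => hab (hc.2.symm.trans hc.1))]
  · exact h.2.1 i j hij

lemma isDelta_val_zero {τ : E n →ₐ[ℚ] E n} {a b : Fin n} {D : E n →ₗ[ℚ] E n}
    (h : IsDelta n τ a b D) (c₁ c₂ : Prop) [Decidable c₁] [Decidable c₂] :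
    D (if c₁ then (1 : E n) else if c₂ then -1 else 0) = 0 := by
  split_ifs
  · exact h.1
  · rw [map_neg, h.1, neg_zero]
  · exact map_zero D

include hσ in
lemma sig_invol (a b : Fin n) (P : E n) : σ a b (σ a b P) = P := by
  have h : (σ a b).comp (σ a b) = AlgHom.id ℚ (E n) :=
    algHom_ext fun i j => by
      simp [AlgHom.coe_comp, Function.comp_apply, hσ, Equiv.swap_apply_self]
  simpa using DFunLike.congr_fun h P

lemma swap3 {a b c : Fin n} (hca : c ≠ a) (hcb : c ≠ b) (t : Fin n) :
    Equiv.swap a b (Equiv.swap b c (Equiv.swap a b t)) = Equiv.swap c a t := by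
  rw [swap_natural a b b c (Equiv.swap a b t), Equiv.swap_apply_right,
    swap_of_miss a b hca hcb, Equiv.swap_apply_self, Equiv.swap_comm]

lemma swap_disj {a b c d : Fin n} (hca : c ≠ a) (hcb : c ≠ b) (hda : d ≠ a) (hdb : d ≠ b)
    (t : Fin n) :
    Equiv.swap a b (Equiv.swap c d (Equiv.swap a b t)) = Equiv.swap c d t := by
  rw [swap_natural a b c d (Equiv.swap a b t), swap_of_miss a b hca hcb,
    swap_of_miss a b hda hdb, Equiv.swap_apply_self]

lemma swap_T1 {a b c : Fin n} (hab : a ≠ b) (hac : a ≠ c) (t : Fin n) :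
    Equiv.swap b c (Equiv.swap c a t) = Equiv.swap a b (Equiv.swap b c t) := by
  rw [swap_natural b c c a t, Equiv.swap_apply_right, swap_of_miss b c hab hac,
    Equiv.swap_comm]

include hσ in
lemma sig_conj3 {a b c : Fin n} (hca : c ≠ a) (hcb : c ≠ b) (P : E n) :
    σ a b (σ b c (σ a b P)) = σ c a P := by
  have h : (σ a b).comp ((σ b c).comp (σ a b)) = σ c a :=
    algHom_ext fun i j => by
      simp only [AlgHom.coe_comp, Function.comp_apply, hσ, swap3 hca hcb]
  simpa using DFunLike.congr_fun h P

include hσ in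
lemma sig_conj_disj {a b c d : Fin n} (hca : c ≠ a) (hcb : c ≠ b) (hda : d ≠ a) (hdb : d ≠ b)
    (P : E n) : σ a b (σ c d (σ a b P)) = σ c d P := by
  have h : (σ a b).comp ((σ c d).comp (σ a b)) = σ c d :=
    algHom_ext fun i j => by
      simp only [AlgHom.coe_comp, Function.comp_apply, hσ, swap_disj hca hcb hda hdb]
  simpa using DFunLike.congr_fun h P

include hσ in
lemma sig_T1 {a b c : Fin n} (hab : a ≠ b) (hac : a ≠ c) (P : E n) :
    σ b c (σ c a P) = σ a b (σ b c P) := by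
  have h : (σ b c).comp (σ c a) = (σ a b).comp (σ b c) :=
    algHom_ext fun i j => by
      simp only [AlgHom.coe_comp, Function.comp_apply, hσ, swap_T1 hab hac]
  simpa using DFunLike.congr_fun h P

/-- Conjugated (negated) operator. -/
noncomputable def conjD (σ' : E n →ₐ[ℚ] E n) (D₁ : E n →ₗ[ℚ] E n) : E n →ₗ[ℚ] E n where
  toFun P := -(σ' (D₁ (σ' P)))
  map_add' u v := by simp only [map_add, neg_add]
  map_smul' c u := by simp only [map_smul, RingHom.id_apply, smul_neg]

/-- Conjugated operator (no sign). -/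
noncomputable def conjDpos (σ' : E n →ₐ[ℚ] E n) (D₁ : E n →ₗ[ℚ] E n) : E n →ₗ[ℚ] E n where
  toFun P := σ' (D₁ (σ' P))
  map_add' u v := by simp only [map_add]
  map_smul' c u := by simp only [map_smul, RingHom.id_apply]

variable (D : Fin n → Fin n → (E n →ₗ[ℚ] E n))
variable (hD : ∀ a b : Fin n, a ≠ b → IsDelta n (σ a b) a b (D a b))

include hσ hD in
lemma conj_self (a b : Fin n) (hab : a ≠ b) :
    IsDelta n (σ a b) a b (conjD (σ a b) (D a b)) := by
  refine ⟨?_, ?_, ?_⟩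
  · show -(σ a b ((D a b) (σ a b 1))) = 0
    rw [map_one, (hD a b hab).1, map_zero, neg_zero]
  · intro i j hij
    show -(σ a b ((D a b) (σ a b (x n i j)))) = _
    rw [hσ a b i j]
    have hne : Equiv.swap a b i ≠ Equiv.swap a b j :=
      fun h => hij ((Equiv.swap a b).injective h)
    rw [(hD a b hab).2.1 _ _ hne]
    have e1 : ∀ t : Fin n, (Equiv.swap a b t = a) ↔ (t = b) := fun t => by
      rw [Equiv.swap_apply_eq_iff, Equiv.swap_apply_left]
    have e2 : ∀ t : Fin n, (Equiv.swap a b t = b) ↔ (t = a) := fun t => by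
      rw [Equiv.swap_apply_eq_iff, Equiv.swap_apply_right]
    simp only [e1, e2]
    split_ifs <;> simp_all [map_one, map_neg, map_zero]
  · intro P Q
    show -(σ a b ((D a b) (σ a b (P * Q)))) = _
    rw [map_mul, (hD a b hab).2.2, sig_invol σ hσ a b P, map_add, map_mul, map_mul,
      sig_invol σ hσ a b Q, neg_add,
      ← neg_mul (σ a b ((D a b) (σ a b P))) Q,
      ← mul_neg (σ a b P) (σ a b ((D a b) (σ a b Q)))]
    rfl

include hσ hD in
lemma D_sig_self (a b : Fin n) (hab : a ≠ b) (P : E n) :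
    D a b (σ a b P) = -(σ a b (D a b P)) := by
  have he : D a b = conjD (σ a b) (D a b) :=
    isDelta_unique a b hab (σ a b) (hD a b hab) (conj_self σ hσ D hD a b hab)
  calc D a b (σ a b P) = conjD (σ a b) (D a b) (σ a b P) := by rw [← he]
  _ = -(σ a b (D a b (σ a b (σ a b P)))) := rfl
  _ = -(σ a b (D a b P)) := by rw [sig_invol σ hσ a b P]

include hσ hD in
lemma conj_cyc (a b c : Fin n) (hab : a ≠ b) (hbc : b ≠ c) (hca : c ≠ a) :
    IsDelta n (σ c a) c a (conjD (σ a b) (D b c)) := by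
  refine ⟨?_, ?_, ?_⟩
  · show -(σ a b ((D b c) (σ a b 1))) = 0
    rw [map_one, (hD b c hbc).1, map_zero, neg_zero]
  · intro i j hij
    show -(σ a b ((D b c) (σ a b (x n i j)))) = _
    rw [hσ a b i j]
    have hne : Equiv.swap a b i ≠ Equiv.swap a b j :=
      fun h => hij ((Equiv.swap a b).injective h)
    rw [(hD b c hbc).2.1 _ _ hne]
    have e1 : ∀ t : Fin n, (Equiv.swap a b t = b) ↔ (t = a) := fun t => by
      rw [Equiv.swap_apply_eq_iff, Equiv.swap_apply_right]
    have e2 : ∀ t : Fin n, (Equiv.swap a b t = c) ↔ (t = c) := fun t => by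
      rw [Equiv.swap_apply_eq_iff, swap_of_miss a b hca (fun h => hbc h.symm)]
    simp only [e1, e2]
    split_ifs <;> simp_all [map_one, map_neg, map_zero]
  · intro P Q
    show -(σ a b ((D b c) (σ a b (P * Q)))) = _
    rw [map_mul, (hD b c hbc).2.2, map_add, map_mul, map_mul,
      sig_invol σ hσ a b Q, sig_conj3 σ hσ hca (fun h => hbc h.symm) P, neg_add,
      ← neg_mul (σ a b ((D b c) (σ a b P))) Q,
      ← mul_neg (σ c a P) (σ a b ((D b c) (σ a b Q)))]
    rfl

include hσ hD in
lemma D_sig_cyc (a b c : Fin n) (hab : a ≠ b) (hbc : b ≠ c) (hca : c ≠ a) (P : E n) :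
    D c a (σ a b P) = -(σ a b (D b c P)) := by
  have he : D c a = conjD (σ a b) (D b c) :=
    isDelta_unique c a hca (σ c a) (hD c a hca) (conj_cyc σ hσ D hD a b c hab hbc hca)
  calc D c a (σ a b P) = conjD (σ a b) (D b c) (σ a b P) := by rw [← he]
  _ = -(σ a b (D b c (σ a b (σ a b P)))) := rfl
  _ = -(σ a b (D b c P)) := by rw [sig_invol σ hσ a b P]

include hσ hD in
lemma conj_disj (a b c d : Fin n) (hcd : c ≠ d)
    (hca : c ≠ a) (hcb : c ≠ b) (hda : d ≠ a) (hdb : d ≠ b) :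
    IsDelta n (σ c d) c d (conjDpos (σ a b) (D c d)) := by
  refine ⟨?_, ?_, ?_⟩
  · show σ a b ((D c d) (σ a b 1)) = 0
    rw [map_one, (hD c d hcd).1, map_zero]
  · intro i j hij
    show σ a b ((D c d) (σ a b (x n i j))) = _
    rw [hσ a b i j]
    have hne : Equiv.swap a b i ≠ Equiv.swap a b j :=
      fun h => hij ((Equiv.swap a b).injective h)
    rw [(hD c d hcd).2.1 _ _ hne]
    have e1 : ∀ t : Fin n, (Equiv.swap a b t = c) ↔ (t = c) := fun t => by
      rw [Equiv.swap_apply_eq_iff, swap_of_miss a b hca hcb]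
    have e2 : ∀ t : Fin n, (Equiv.swap a b t = d) ↔ (t = d) := fun t => by
      rw [Equiv.swap_apply_eq_iff, swap_of_miss a b hda hdb]
    simp only [e1, e2]
    split_ifs <;> simp_all [map_one, map_neg, map_zero]
  · intro P Q
    show σ a b ((D c d) (σ a b (P * Q))) = _
    rw [map_mul, (hD c d hcd).2.2, map_add, map_mul, map_mul,
      sig_invol σ hσ a b Q, sig_conj_disj σ hσ hca hcb hda hdb P]
    rfl

include hσ hD in
lemma D_sig_disj (a b c d : Fin n) (hab : a ≠ b) (hcd : c ≠ d)
    (hca : c ≠ a) (hcb : c ≠ b) (hda : d ≠ a) (hdb : d ≠ b) (P : E n) :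
    D c d (σ a b P) = σ a b (D c d P) := by
  have he : D c d = conjDpos (σ a b) (D c d) :=
    isDelta_unique c d hcd (σ c d) (hD c d hcd)
      (conj_disj σ hσ D hD a b c d hcd hca hcb hda hdb)
  calc D c d (σ a b P) = conjDpos (σ a b) (D c d) (σ a b P) := by rw [← he]
  _ = σ a b (D c d (σ a b (σ a b P))) := rfl
  _ = σ a b (D c d P) := by rw [sig_invol σ hσ a b P]

lemma swap_comm_disj {a b c d : Fin n} (hca : c ≠ a) (hcb : c ≠ b) (hda : d ≠ a) (hdb : d ≠ b)
    (t : Fin n) :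
    Equiv.swap a b (Equiv.swap c d t) = Equiv.swap c d (Equiv.swap a b t) := by
  rw [swap_natural a b c d t, swap_of_miss a b hca hcb, swap_of_miss a b hda hdb]

include hσ in
lemma sig_comm_disj {a b c d : Fin n} (hca : c ≠ a) (hcb : c ≠ b) (hda : d ≠ a) (hdb : d ≠ b)
    (P : E n) : σ a b (σ c d P) = σ c d (σ a b P) := by
  have h : (σ a b).comp (σ c d) = (σ c d).comp (σ a b) :=
    algHom_ext fun i j => by
      simp only [AlgHom.coe_comp, Function.comp_apply, hσ, swap_comm_disj hca hcb hda hdb]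
  simpa using DFunLike.congr_fun h P

include hσ hD in
lemma comp_self (a b : Fin n) (hab : a ≠ b) : (D a b).comp (D a b) = 0 := by
  apply vanish (AlgHom.id ℚ (E n))
  · simp only [LinearMap.comp_apply, (hD a b hab).1, map_zero]
  · intro i j
    simp only [LinearMap.comp_apply, isDelta_x_val (hD a b hab) hab i j,
      isDelta_val_zero (hD a b hab)]
  · intro P Q
    simp only [LinearMap.comp_apply, AlgHom.coe_id, id_eq]
    rw [(hD a b hab).2.2, map_add, (hD a b hab).2.2, (hD a b hab).2.2,
      D_sig_self σ hσ D hD a b hab P, sig_invol σ hσ a b P,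
      neg_mul (σ a b (D a b P)) (D a b Q)]
    abel

include hσ hD in
lemma comp_comm (a b c d : Fin n) (hnd : List.Nodup [a, b, c, d]) :
    (D a b).comp (D c d) = (D c d).comp (D a b) := by
  have hne : a ≠ b ∧ (a ≠ c ∧ a ≠ d) ∧ b ≠ c ∧ b ≠ d ∧ c ≠ d := by
    simpa [List.nodup_cons, not_or, and_assoc] using hnd
  obtain ⟨hab, ⟨hac, had⟩, hbc, hbd, hcd⟩ := hne
  rw [← sub_eq_zero]
  apply vanish ((σ a b).comp (σ c d))
  · simp only [LinearMap.sub_apply, LinearMap.comp_apply, (hD a b hab).1, (hD c d hcd).1,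
      map_zero, sub_zero]
  · intro i j
    simp only [LinearMap.sub_apply, LinearMap.comp_apply,
      isDelta_x_val (hD a b hab) hab i j, isDelta_x_val (hD c d hcd) hcd i j,
      isDelta_val_zero (hD a b hab), isDelta_val_zero (hD c d hcd), sub_self]
  · intro P Q
    simp only [LinearMap.sub_apply, LinearMap.comp_apply, AlgHom.coe_comp,
      Function.comp_apply]
    rw [(hD c d hcd).2.2, map_add, (hD a b hab).2.2, (hD a b hab).2.2,
      (hD a b hab).2.2, map_add, (hD c d hcd).2.2, (hD c d hcd).2.2,
      D_sig_disj σ hσ D hD a b c d hab hcd (Ne.symm hac) (Ne.symm hbc) (Ne.symm had)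
        (Ne.symm hbd) P,
      D_sig_disj σ hσ D hD c d a b hcd hab hac had hbc hbd P,
      sig_comm_disj σ hσ hac had hbc hbd P,
      sub_mul, mul_sub]
    abel

include hσ hD in
lemma comp_cyclic (a b c : Fin n) (hnd : List.Nodup [a, b, c]) :
    (D a b).comp (D b c) + (D b c).comp (D c a) + (D c a).comp (D a b) = 0 := by
  have hne : a ≠ b ∧ a ≠ c ∧ b ≠ c := by
    simpa [List.nodup_cons, not_or, and_assoc] using hnd
  obtain ⟨hab, hac, hbc⟩ := hne
  have hca : c ≠ a := Ne.symm hac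
  apply vanish ((σ a b).comp (σ b c))
  · simp only [LinearMap.add_apply, LinearMap.comp_apply, (hD b c hbc).1, (hD c a hca).1,
      (hD a b hab).1, map_zero, add_zero]
  · intro i j
    simp only [LinearMap.add_apply, LinearMap.comp_apply,
      isDelta_x_val (hD b c hbc) hbc i j, isDelta_x_val (hD c a hca) hca i j,
      isDelta_x_val (hD a b hab) hab i j,
      isDelta_val_zero (hD a b hab), isDelta_val_zero (hD b c hbc),
      isDelta_val_zero (hD c a hca), add_zero]
  · intro P Q
    simp only [LinearMap.add_apply, LinearMap.comp_apply, AlgHom.coe_comp,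
      Function.comp_apply]
    rw [(hD b c hbc).2.2, map_add, (hD a b hab).2.2, (hD a b hab).2.2,
      (hD c a hca).2.2, map_add, (hD b c hbc).2.2, (hD b c hbc).2.2,
      (hD a b hab).2.2, map_add, (hD c a hca).2.2, (hD c a hca).2.2,
      D_sig_cyc σ hσ D hD b c a hbc hca hab P,
      D_sig_cyc σ hσ D hD c a b hca hab hbc P,
      D_sig_cyc σ hσ D hD a b c hab hbc hca P,
      sig_T1 σ hσ hab hac P,
      ← sig_T1 σ hσ hca (Ne.symm hbc) P,
      neg_mul (σ b c (D c a P)) (D b c Q),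
      neg_mul (σ c a (D a b P)) (D c a Q),
      neg_mul (σ a b (D b c P)) (D a b Q),
      add_mul, add_mul, mul_add, mul_add]
    abel

end Part2
end Aux

/-- for all `a < b` there exists a unique `ℚ`-linear map `Δ_{ab} : E n → E n`
with `Δ_{ab}(1) = 0`, the prescribed values on generators, and the twisted Leibniz rule
`Δ_{ab}(PQ) = Δ_{ab}(P)Q + σ_{ab}(P)Δ_{ab}(Q)`.  Moreover any family of such operators
(indexed by all ordered pairs `a ≠ b`, so that `Δ_{ba} = -Δ_{ab}`) satisfies the defining
relations of `E n`. -/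
theorem stmt1 (n : ℕ) (hn : 1 ≤ n)
    (σ : Fin n → Fin n → (E n →ₐ[ℚ] E n))
    (hσ : ∀ a b i j : Fin n,
      σ a b (x n i j) = x n (Equiv.swap a b i) (Equiv.swap a b j)) :
    (∀ a b : Fin n, a < b → ∃! D : E n →ₗ[ℚ] E n, IsDelta n (σ a b) a b D) ∧
    (∀ D : Fin n → Fin n → (E n →ₗ[ℚ] E n),
      (∀ a b : Fin n, a ≠ b → IsDelta n (σ a b) a b (D a b)) →
      (∀ a b : Fin n, a ≠ b → (D a b).comp (D a b) = 0) ∧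
      (∀ a b c d : Fin n, List.Nodup [a, b, c, d] →
        (D a b).comp (D c d) = (D c d).comp (D a b)) ∧
      (∀ a b c : Fin n, List.Nodup [a, b, c] →
        (D a b).comp (D b c) + (D b c).comp (D c a) + (D c a).comp (D a b) = 0)) := by
  constructor
  · intro a b hab
    exact ⟨Aux.delta a b (σ a b) hab.ne (hσ a b),
      Aux.delta_isDelta a b (σ a b) hab.ne (hσ a b),
      fun D hDel => Aux.isDelta_unique a b hab.ne (σ a b) hDel
        (Aux.delta_isDelta a b (σ a b) hab.ne (hσ a b))⟩
  · intro D hD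
    exact ⟨fun a b hab => Aux.comp_self σ hσ D hD a b hab,
      fun a b c d hnd => Aux.comp_comm σ hσ D hD a b c d hnd,
      fun a b c hnd => Aux.comp_cyclic σ hσ D hD a b c hnd⟩

end FK
end

section
/- Suppose for each pair 1 ≤ a < b ≤ n we are given ℚ-linear maps D_{ab} : E_n → E_n and N_{ab} : E_n → E_n (with D_{ba} := −D_{ab}, N_{ba} := −N_{ab}) such that: D_{ab}(1) = N_{ab}(1) = 0; on generators, D_{ab}(x_{ij}) = N_{ab}(x_{ij}) = 1, −1, or 0 according as (i,j) = (a,b), (i,j) = (b,a), or neither; D_{ab}(PQ) = D_{ab}(P)·Q + σ_{ab}(P)·D_{ab}(Q) for all P, Q ∈ E_n; and for all products of generators P and Q, N_{ab}(PQ) = P·N_{ab}(Q) + N_{σ_Q(a)σ_Q(b)}(P)·Q, where σ_Q ∈ S_n is the product of the transpositions (i_1 j_1)···(i_d j_d) when Q = x_{i_1 j_1}···x_{i_d j_d}. For a product of generators P = x_{i_1 j_1}···x_{i_d j_d}, set Δ_P := D_{i_1 j_1}∘···∘D_{i_d j_d} and ∇_P := N_{i_d j_d}∘···∘N_{i_1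 j_1}. Then for any two products of generators P and Q of the same length, Δ_P(Q) = Δ_Q(P) = ∇_Q(P) = ∇_P(Q), and this common value is a scalar multiple of 1 ∈ E_n. -/
open scoped TensorProduct

namespace FK

/-- The permutation `σ_Q = (i₁ j₁)⋯(i_d j_d)` associated to a product of generators
`Q = x_{i₁j₁}⋯x_{i_d j_d}`. -/
def lperm (n : ℕ) (l : List (Fin n × Fin n)) : Equiv.Perm (Fin n) :=
  (l.map fun p => Equiv.swap p.1 p.2).prod

/-- The composite operator `F_{p₁} ∘ F_{p₂} ∘ ⋯ ∘ F_{p_d}` attached to a list of pairs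
`[p₁, …, p_d]` (composition in the displayed order, leftmost applied last to the input... 
i.e. `F_{p₁}` is the outermost map). -/
def opComp (n : ℕ) (F : Fin n → Fin n → Module.End ℚ (E n))
    (l : List (Fin n × Fin n)) : Module.End ℚ (E n) :=
  (l.map fun p => F p.1 p.2).prod

/-!
Both `Δ_P(Q)` and `∇_Q(P)` unfold by the same recursion on the letters of `Q`. For `Δ_P`, the
twisted Leibniz rule moves the first letter `x_q` of `Q` leftwards through `D_{p_d}, …, D_{p_1}`;
it is twisted by each `D_p` it passes and is contracted by one of them, leaving `Δ_{P∖t}` applied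
to the rest of `Q` (the term where nothing contracts it is killed because `D` lowers degree). For
`∇_Q`, the rule for `N` expands `N_q(P)` into exactly the same contractions. Hence both equal
`pairing P Q • 1` for an explicit rational `pairing`, and everything reduces to the symmetry of
`pairing`. That is proved by expanding both sides twice; the two boundary terms agree because a
nonzero `pairing P Q` forces `σ_P σ_Q = 1`.
-/

section Pairing

variable {α : Type*} [DecidableEq α]

def swapsProd (l : List (α × α)) : Equiv.Perm α :=
  (l.map fun p => Equiv.swap p.1 p.2).prod

@[simp] lemma swapsProd_nil : swapsProd ([] : List (α × α)) = 1 := rfl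

@[simp] lemma swapsProd_cons (p : α × α) (l : List (α × α)) :
    swapsProd (p :: l) = Equiv.swap p.1 p.2 * swapsProd l := by
  simp [swapsProd]

/-- The value of `D_p` (and of `N_p`) on the generator `x_q`. -/
def pairSign (p q : α × α) : ℚ :=
  if q = p then 1 else if q = p.swap then -1 else 0

lemma pairSign_comm (p q : α × α) : pairSign p q = pairSign q p := by
  unfold pairSign
  by_cases h : q = p
  · simp [h]
  · have h' : q = p.swap ↔ p = q.swap := ⟨fun h => by simp [h], fun h => by simp [h]⟩
    simp [h, Ne.symm h, h']

lemma pairSign_map (f : Equiv.Perm α) (p q : α × α) :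
    pairSign (f p.1, f p.2) (f q.1, f q.2) = pairSign p q := by
  simp only [pairSign, Prod.ext_iff, Prod.fst_swap, Prod.snd_swap, f.injective.eq_iff]

lemma swap_eq_of_pairSign_ne_zero {p q : α × α} (h : pairSign p q ≠ 0) :
    Equiv.swap p.1 p.2 = Equiv.swap q.1 q.2 := by
  unfold pairSign at h
  split_ifs at h with h1 h2
  · rw [h1]
  · rw [h2, Prod.fst_swap, Prod.snd_swap, Equiv.swap_comm]
  · exact absurd rfl h

/-- The coefficient with which the `t`-th letter of `P` contracts the letter `q` standing to its
right, after `q` has been moved past (and twisted by) the letters of `P` after position `t`. -/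
def contractCoeff : List (α × α) → α × α → ℕ → ℚ
  | [], _, _ => 0
  | p :: P, q, 0 => pairSign p (swapsProd P q.1, swapsProd P q.2)
  | _ :: P, q, t + 1 => contractCoeff P q t

lemma swapsProd_eq_of_contractCoeff_ne_zero {P : List (α × α)} {q : α × α} {t : ℕ}
    (h : contractCoeff P q t ≠ 0) :
    swapsProd P = swapsProd (P.eraseIdx t) * Equiv.swap q.1 q.2 := by
  induction P generalizing t with
  | nil => exact absurd rfl h
  | cons p P ih =>
    cases t with
    | zero =>
      rw [swapsProd_cons, swap_eq_of_pairSign_ne_zero h, List.eraseIdx_cons_zero]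
      exact (Equiv.mul_swap_eq_swap_mul _ _ _).symm
    | succ t =>
      rw [swapsProd_cons, ih h, List.eraseIdx_cons_succ, swapsProd_cons, mul_assoc]

def pairing : List (α × α) → List (α × α) → ℚ
  | P, [] => if P = [] then 1 else 0
  | P, q :: Q => ∑ t ∈ Finset.range P.length, contractCoeff P q t * pairing (P.eraseIdx t) Q

@[simp] lemma pairing_nil_right (P : List (α × α)) : pairing P [] = if P = [] then 1 else 0 := by
  rw [pairing]

lemma pairing_cons_right (P Q : List (α × α)) (q : α × α) :
    pairing P (q :: Q) =
      ∑ t ∈ Finset.range P.length, contractCoeff P q t * pairing (P.eraseIdx t) Q := by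
  rw [pairing]

lemma pairing_eq_zero_of_length_ne {P Q : List (α × α)} (h : P.length ≠ Q.length) :
    pairing P Q = 0 := by
  induction Q generalizing P with
  | nil => simpa using h
  | cons q Q ih =>
    rw [pairing_cons_right]
    refine Finset.sum_eq_zero fun t ht => ?_
    have ht := Finset.mem_range.mp ht
    rw [ih (by rw [List.length_eraseIdx_of_lt ht]; simp only [List.length_cons] at h; omega),
      mul_zero]

lemma swapsProd_mul_eq_one_of_pairing_ne_zero {P Q : List (α × α)} (h : pairing P Q ≠ 0) :
    swapsProd P * swapsProd Q = 1 := by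
  induction Q generalizing P with
  | nil =>
    rw [pairing_nil_right, ite_ne_right_iff] at h
    simp [h.1]
  | cons q Q ih =>
    rw [pairing_cons_right] at h
    obtain ⟨t, -, ht⟩ := Finset.exists_ne_zero_of_sum_ne_zero h
    rw [swapsProd_eq_of_contractCoeff_ne_zero (left_ne_zero_of_mul ht), swapsProd_cons,
      mul_assoc, Equiv.swap_mul_self_mul]
    exact ih (right_ne_zero_of_mul ht)

lemma pairing_cons_cons (p q : α × α) (P Q : List (α × α)) :
    pairing (p :: P) (q :: Q) =
      pairSign p (swapsProd P q.1, swapsProd P q.2) * pairing P Q +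
        ∑ u ∈ Finset.range P.length, contractCoeff P q u * pairing (p :: P.eraseIdx u) Q := by
  rw [pairing_cons_right, List.length_cons, Finset.sum_range_succ', add_comm]
  rfl

lemma pairSign_swapsProd_mul_pairing (p q : α × α) (P Q : List (α × α)) :
    pairSign p (swapsProd P q.1, swapsProd P q.2) * pairing P Q =
      pairSign q (swapsProd Q p.1, swapsProd Q p.2) * pairing P Q := by
  rcases eq_or_ne (pairing P Q) 0 with h | h
  · simp [h]
  have hp : (swapsProd P (swapsProd Q p.1), swapsProd P (swapsProd Q p.2)) = p := by
    have h1 := swapsProd_mul_eq_one_of_pairing_ne_zero h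
    ext <;> simp [← Equiv.Perm.mul_apply, h1]
  rw [← pairSign_map (swapsProd P) q, hp, pairSign_comm]

lemma sum_contractCoeff_mul_pairing_cons (p q : α × α) (P Q : List (α × α))
    (hcomm : ∀ P' Q' : List (α × α), P'.length + Q'.length < P.length + Q.length + 1 →
      pairing P' Q' = pairing Q' P') :
    ∑ u ∈ Finset.range P.length, contractCoeff P q u * pairing (p :: P.eraseIdx u) Q =
      ∑ u ∈ Finset.range P.length, ∑ s ∈ Finset.range Q.length,
        contractCoeff P q u * contractCoeff Q p s * pairing (Q.eraseIdx s) (P.eraseIdx u) := by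
  refine Finset.sum_congr rfl fun u hu => ?_
  have hu := Finset.mem_range.mp hu
  rw [hcomm _ _ (by simp only [List.length_cons, List.length_eraseIdx_of_lt hu]; omega),
    pairing_cons_right, Finset.mul_sum]
  simp only [mul_assoc]

lemma pairing_comm (P Q : List (α × α)) : pairing P Q = pairing Q P := by
  induction hm : P.length + Q.length using Nat.strong_induction_on generalizing P Q with
  | _ m ih =>
  rcases P with _ | ⟨p, P⟩ <;> rcases Q with _ | ⟨q, Q⟩
  · rfl
  · rw [pairing_eq_zero_of_length_ne (by simp), pairing_eq_zero_of_length_ne (by simp)]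
  · rw [pairing_eq_zero_of_length_ne (by simp), pairing_eq_zero_of_length_ne (by simp)]
  simp only [List.length_cons] at hm
  have ih' : ∀ P' Q' : List (α × α), P'.length + Q'.length < P.length + Q.length + 1 →
      pairing P' Q' = pairing Q' P' := fun P' Q' h => ih _ (by omega) P' Q' rfl
  rw [pairing_cons_cons, pairing_cons_cons, ih' P Q (by omega),
    pairSign_swapsProd_mul_pairing, sum_contractCoeff_mul_pairing_cons p q P Q ih',
    sum_contractCoeff_mul_pairing_cons q p Q P (fun P' Q' h => ih' P' Q' (by omega)),
    Finset.sum_comm]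
  refine congrArg _ (Finset.sum_congr rfl fun s hs => Finset.sum_congr rfl fun u hu => ?_)
  have hu := Finset.mem_range.mp hu
  have hs := Finset.mem_range.mp hs
  rw [mul_comm (contractCoeff P q u), ih' _ _ (by
    simp only [List.length_eraseIdx_of_lt hu, List.length_eraseIdx_of_lt hs]; omega)]

end Pairing

section Operators

variable {n : ℕ}

lemma lperm_eq_swapsProd (l : List (Fin n × Fin n)) : lperm n l = swapsProd l := rfl

lemma word_nil : word n [] = 1 := rfl

lemma word_cons (p : Fin n × Fin n) (l : List (Fin n × Fin n)) :
    word n (p :: l) = x n p.1 p.2 * word n l := by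
  simp [word]

lemma opComp_nil (F : Fin n → Fin n → Module.End ℚ (E n)) (y : E n) :
    opComp n F [] y = y := rfl

lemma opComp_cons (F : Fin n → Fin n → Module.End ℚ (E n)) (p : Fin n × Fin n)
    (l : List (Fin n × Fin n)) (y : E n) :
    opComp n F (p :: l) y = F p.1 p.2 (opComp n F l y) := by
  simp [opComp, Module.End.mul_apply]

lemma opComp_append (F : Fin n → Fin n → Module.End ℚ (E n)) (l l' : List (Fin n × Fin n))
    (y : E n) :
    opComp n F (l ++ l') y = opComp n F l (opComp n F l' y) := by
  simp [opComp, Module.End.mul_apply]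

lemma apply_x_eq_pairSign_smul (F : Fin n → Fin n → Module.End ℚ (E n))
    (hF : ∀ a b i j : Fin n, a ≠ b → i ≠ j →
      F a b (x n i j) = if i = a ∧ j = b then 1 else if i = b ∧ j = a then -1 else 0)
    {a b i j : Fin n} (hab : a ≠ b) (hij : i ≠ j) :
    F a b (x n i j) = pairSign (a, b) (i, j) • (1 : E n) := by
  rw [hF _ _ _ _ hab hij]
  simp only [pairSign, Prod.ext_iff, Prod.fst_swap, Prod.snd_swap]
  split_ifs
  · simp only [one_smul]
  · exact (neg_one_smul ℚ (1 : E n)).symm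
  · simp only [zero_smul]

lemma opComp_one (D : Fin n → Fin n → Module.End ℚ (E n))
    (hD1 : ∀ a b : Fin n, a ≠ b → D a b 1 = 0)
    {P : List (Fin n × Fin n)} (hP : ∀ p ∈ P, p.1 ≠ p.2) :
    opComp n D P 1 = pairing P [] • (1 : E n) := by
  induction P with
  | nil => simp [opComp_nil]
  | cons p P ih =>
    rw [opComp_cons, ih fun r hr => hP r (List.mem_cons_of_mem p hr), map_smul,
      hD1 _ _ (hP p List.mem_cons_self)]
    simp

lemma opComp_x_mul (σ : Fin n → Fin n → (E n →ₐ[ℚ] E n))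
    (hσ : ∀ a b i j : Fin n,
      σ a b (x n i j) = x n (Equiv.swap a b i) (Equiv.swap a b j))
    (D : Fin n → Fin n → Module.End ℚ (E n))
    (hDgen : ∀ a b i j : Fin n, a ≠ b → i ≠ j →
      D a b (x n i j) = if i = a ∧ j = b then 1 else if i = b ∧ j = a then -1 else 0)
    (hDLeib : ∀ a b : Fin n, a ≠ b → ∀ P Q : E n,
      D a b (P * Q) = D a b P * Q + σ a b P * D a b Q)
    {P : List (Fin n × Fin n)} (hP : ∀ p ∈ P, p.1 ≠ p.2) {q : Fin n × Fin n} (hq : q.1 ≠ q.2)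
    (Z : E n) :
    opComp n D P (x n q.1 q.2 * Z) =
      x n (swapsProd P q.1) (swapsProd P q.2) * opComp n D P Z +
        ∑ t ∈ Finset.range P.length, contractCoeff P q t • opComp n D (P.eraseIdx t) Z := by
  induction P with
  | nil => simp [opComp_nil]
  | cons p P ih =>
    have hp : p.1 ≠ p.2 := hP p List.mem_cons_self
    have hq' : swapsProd P q.1 ≠ swapsProd P q.2 := (swapsProd P).injective.ne hq
    rw [opComp_cons, ih fun r hr => hP r (List.mem_cons_of_mem p hr), map_add, map_sum,
      hDLeib _ _ hp, hσ, apply_x_eq_pairSign_smul D hDgen hp hq', Prod.mk.eta, List.length_cons,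
      Finset.sum_range_succ']
    simp only [map_smul, smul_mul_assoc, one_mul, opComp_cons, swapsProd_cons,
      Equiv.Perm.mul_apply, List.eraseIdx_cons_succ, List.eraseIdx_cons_zero]
    rw [contractCoeff]
    abel

lemma opComp_word_eq_pairing_smul (σ : Fin n → Fin n → (E n →ₐ[ℚ] E n))
    (hσ : ∀ a b i j : Fin n,
      σ a b (x n i j) = x n (Equiv.swap a b i) (Equiv.swap a b j))
    (D : Fin n → Fin n → Module.End ℚ (E n))
    (hD1 : ∀ a b : Fin n, a ≠ b → D a b 1 = 0)
    (hDgen : ∀ a b i j : Fin n, a ≠ b → i ≠ j →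
      D a b (x n i j) = if i = a ∧ j = b then 1 else if i = b ∧ j = a then -1 else 0)
    (hDLeib : ∀ a b : Fin n, a ≠ b → ∀ P Q : E n,
      D a b (P * Q) = D a b P * Q + σ a b P * D a b Q)
    {P Q : List (Fin n × Fin n)} (hP : ∀ p ∈ P, p.1 ≠ p.2) (hQ : ∀ p ∈ Q, p.1 ≠ p.2)
    (hlen : Q.length ≤ P.length) :
    opComp n D P (word n Q) = pairing P Q • (1 : E n) := by
  induction Q generalizing P with
  | nil => exact opComp_one D hD1 hP
  | cons q Q ih =>
    have hQ' : ∀ r ∈ Q, r.1 ≠ r.2 := fun r hr => hQ r (List.mem_cons_of_mem q hr)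
    have hlen' : Q.length < P.length := by simpa using hlen
    rw [word_cons, opComp_x_mul σ hσ D hDgen hDLeib hP (hQ q List.mem_cons_self),
      ih hP hQ' hlen'.le, pairing_eq_zero_of_length_ne hlen'.ne', zero_smul, mul_zero, zero_add,
      pairing_cons_right, Finset.sum_smul]
    refine Finset.sum_congr rfl fun t ht => ?_
    have ht := Finset.mem_range.mp ht
    rw [ih (fun r hr => hP r (List.mem_of_mem_eraseIdx hr)) hQ'
      (by rw [List.length_eraseIdx_of_lt ht]; omega), smul_smul]

lemma apply_word_eq_sum_contractCoeff_smul (N : Fin n → Fin n → Module.End ℚ (E n))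
    (hN1 : ∀ a b : Fin n, a ≠ b → N a b 1 = 0)
    (hNgen : ∀ a b i j : Fin n, a ≠ b → i ≠ j →
      N a b (x n i j) = if i = a ∧ j = b then 1 else if i = b ∧ j = a then -1 else 0)
    (hNLeib : ∀ a b : Fin n, a ≠ b → ∀ lP lQ : List (Fin n × Fin n),
      (∀ p ∈ lP, p.1 ≠ p.2) → (∀ p ∈ lQ, p.1 ≠ p.2) →
      N a b (word n lP * word n lQ) =
        word n lP * N a b (word n lQ) +
        N (lperm n lQ a) (lperm n lQ b) (word n lP) * word n lQ)
    {P : List (Fin n × Fin n)} (hP : ∀ p ∈ P, p.1 ≠ p.2) {q : Fin n × Fin n} (hq : q.1 ≠ q.2) :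
    N q.1 q.2 (word n P) =
      ∑ t ∈ Finset.range P.length, contractCoeff P q t • word n (P.eraseIdx t) := by
  induction P with
  | nil => simp [word_nil, hN1 _ _ hq]
  | cons p P ih =>
    have hp : p.1 ≠ p.2 := hP p List.mem_cons_self
    have hP' : ∀ r ∈ P, r.1 ≠ r.2 := fun r hr => hP r (List.mem_cons_of_mem p hr)
    have hsingle : word n [p] = x n p.1 p.2 := by rw [word_cons, word_nil, mul_one]
    have hq' : swapsProd P q.1 ≠ swapsProd P q.2 := (swapsProd P).injective.ne hq
    have hLeib := hNLeib _ _ hq [p] P (by simpa using hp) hP'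
    rw [hsingle, lperm_eq_swapsProd] at hLeib
    rw [word_cons, hLeib, ih hP', apply_x_eq_pairSign_smul N hNgen hq' hp, Prod.mk.eta,
      pairSign_comm, List.length_cons, Finset.sum_range_succ', Finset.mul_sum]
    simp only [mul_smul_comm, smul_mul_assoc, one_mul, List.eraseIdx_cons_succ,
      List.eraseIdx_cons_zero, word_cons, contractCoeff]

lemma opComp_reverse_word_eq_pairing_smul (N : Fin n → Fin n → Module.End ℚ (E n))
    (hN1 : ∀ a b : Fin n, a ≠ b → N a b 1 = 0)
    (hNgen : ∀ a b i j : Fin n, a ≠ b → i ≠ j →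
      N a b (x n i j) = if i = a ∧ j = b then 1 else if i = b ∧ j = a then -1 else 0)
    (hNLeib : ∀ a b : Fin n, a ≠ b → ∀ lP lQ : List (Fin n × Fin n),
      (∀ p ∈ lP, p.1 ≠ p.2) → (∀ p ∈ lQ, p.1 ≠ p.2) →
      N a b (word n lP * word n lQ) =
        word n lP * N a b (word n lQ) +
        N (lperm n lQ a) (lperm n lQ b) (word n lP) * word n lQ)
    {P Q : List (Fin n × Fin n)} (hP : ∀ p ∈ P, p.1 ≠ p.2) (hQ : ∀ p ∈ Q, p.1 ≠ p.2)
    (hlen : P.length = Q.length) :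
    opComp n N Q.reverse (word n P) = pairing P Q • (1 : E n) := by
  induction Q generalizing P with
  | nil => simp [List.length_eq_zero_iff.mp hlen, word_nil, opComp_nil]
  | cons q Q ih =>
    have hQ' : ∀ r ∈ Q, r.1 ≠ r.2 := fun r hr => hQ r (List.mem_cons_of_mem q hr)
    rw [List.reverse_cons, opComp_append, opComp_cons, opComp_nil,
      apply_word_eq_sum_contractCoeff_smul N hN1 hNgen hNLeib hP (hQ q List.mem_cons_self),
      map_sum, pairing_cons_right, Finset.sum_smul]
    refine Finset.sum_congr rfl fun t ht => ?_
    have ht := Finset.mem_range.mp ht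
    rw [map_smul, ih (fun r hr => hP r (List.mem_of_mem_eraseIdx hr)) hQ'
      (by rw [List.length_eraseIdx_of_lt ht, hlen]; simp), smul_smul]

end Operators

theorem stmt2_general (n : ℕ)
    (σ : Fin n → Fin n → (E n →ₐ[ℚ] E n))
    (hσ : ∀ a b i j : Fin n,
      σ a b (x n i j) = x n (Equiv.swap a b i) (Equiv.swap a b j))
    (D N : Fin n → Fin n → Module.End ℚ (E n))
    (hD1 : ∀ a b : Fin n, a ≠ b → D a b 1 = 0)
    (hN1 : ∀ a b : Fin n, a ≠ b → N a b 1 = 0)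
    (hDgen : ∀ a b i j : Fin n, a ≠ b → i ≠ j →
      D a b (x n i j) = if i = a ∧ j = b then 1 else if i = b ∧ j = a then -1 else 0)
    (hNgen : ∀ a b i j : Fin n, a ≠ b → i ≠ j →
      N a b (x n i j) = if i = a ∧ j = b then 1 else if i = b ∧ j = a then -1 else 0)
    (hDLeib : ∀ a b : Fin n, a ≠ b → ∀ P Q : E n,
      D a b (P * Q) = D a b P * Q + σ a b P * D a b Q)
    (hNLeib : ∀ a b : Fin n, a ≠ b → ∀ lP lQ : List (Fin n × Fin n),
      (∀ p ∈ lP, p.1 ≠ p.2) → (∀ p ∈ lQ, p.1 ≠ p.2) →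
      N a b (word n lP * word n lQ) =
        word n lP * N a b (word n lQ) +
        N (lperm n lQ a) (lperm n lQ b) (word n lP) * word n lQ) :
    ∀ lP lQ : List (Fin n × Fin n),
      (∀ p ∈ lP, p.1 ≠ p.2) → (∀ p ∈ lQ, p.1 ≠ p.2) →
      lP.length = lQ.length →
      opComp n D lP (word n lQ) = opComp n D lQ (word n lP) ∧
      opComp n D lP (word n lQ) = opComp n N lQ.reverse (word n lP) ∧
      opComp n D lP (word n lQ) = opComp n N lP.reverse (word n lQ) ∧
      ∃ c : ℚ, opComp n D lP (word n lQ) = c • (1 : E n) := by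
  intro lP lQ hP hQ hlen
  have hΔ := fun {P Q : List (Fin n × Fin n)} hP hQ (hlen : P.length = Q.length) =>
    opComp_word_eq_pairing_smul σ hσ D hD1 hDgen hDLeib hP hQ hlen.ge
  have hnabla := fun {P Q : List (Fin n × Fin n)} hP hQ (hlen : P.length = Q.length) =>
    opComp_reverse_word_eq_pairing_smul N hN1 hNgen hNLeib hP hQ hlen
  refine ⟨?_, ?_, ?_, pairing lP lQ, hΔ hP hQ hlen⟩
  · rw [hΔ hP hQ hlen, hΔ hQ hP hlen.symm, pairing_comm]
  · rw [hΔ hP hQ hlen, hnabla hP hQ hlen]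
  · rw [hΔ hP hQ hlen, hnabla hQ hP hlen.symm, pairing_comm]

/-- given families `D_{ab}` and `N_{ab}` satisfying the stated axioms
(the twisted Leibniz rule for `D` and the dual rule for `N` on products of generators),
for any two products of generators `P`, `Q` of the same length one has
`Δ_P(Q) = Δ_Q(P) = (P)∇_Q = (Q)∇_P`, and this common value is a scalar multiple of `1`.
Here, for `P = x_{i₁j₁}⋯x_{i_dj_d}`, `Δ_P = D_{i₁j₁}∘⋯∘D_{i_dj_d}` and
`∇_P = N_{i_dj_d}∘⋯∘N_{i₁j₁}`. -/
theorem stmt2 (n : ℕ) (hn : 1 ≤ n)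
    (σ : Fin n → Fin n → (E n →ₐ[ℚ] E n))
    (hσ : ∀ a b i j : Fin n,
      σ a b (x n i j) = x n (Equiv.swap a b i) (Equiv.swap a b j))
    (D N : Fin n → Fin n → Module.End ℚ (E n))
    (hDanti : ∀ a b : Fin n, a ≠ b → D b a = -D a b)
    (hNanti : ∀ a b : Fin n, a ≠ b → N b a = -N a b)
    (hD1 : ∀ a b : Fin n, a ≠ b → D a b 1 = 0)
    (hN1 : ∀ a b : Fin n, a ≠ b → N a b 1 = 0)
    (hDgen : ∀ a b i j : Fin n, a ≠ b → i ≠ j →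
      D a b (x n i j) = if i = a ∧ j = b then 1 else if i = b ∧ j = a then -1 else 0)
    (hNgen : ∀ a b i j : Fin n, a ≠ b → i ≠ j →
      N a b (x n i j) = if i = a ∧ j = b then 1 else if i = b ∧ j = a then -1 else 0)
    (hDLeib : ∀ a b : Fin n, a ≠ b → ∀ P Q : E n,
      D a b (P * Q) = D a b P * Q + σ a b P * D a b Q)
    (hNLeib : ∀ a b : Fin n, a ≠ b → ∀ lP lQ : List (Fin n × Fin n),
      (∀ p ∈ lP, p.1 ≠ p.2) → (∀ p ∈ lQ, p.1 ≠ p.2) →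
      N a b (word n lP * word n lQ) =
        word n lP * N a b (word n lQ) +
        N (lperm n lQ a) (lperm n lQ b) (word n lP) * word n lQ) :
    ∀ lP lQ : List (Fin n × Fin n),
      (∀ p ∈ lP, p.1 ≠ p.2) → (∀ p ∈ lQ, p.1 ≠ p.2) →
      lP.length = lQ.length →
      opComp n D lP (word n lQ) = opComp n D lQ (word n lP) ∧
      opComp n D lP (word n lQ) = opComp n N lQ.reverse (word n lP) ∧
      opComp n D lP (word n lQ) = opComp n N lP.reverse (word n lQ) ∧
      ∃ c : ℚ, opComp n D lP (word n lQ) = c • (1 : E n) :=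
  stmt2_general n σ hσ D N hD1 hN1 hDgen hNgen hDLeib hNLeib

end FK
end

section
/- For every m with 3 ≤ m ≤ n and any distinct elements a_1, …, a_m of {1,…,n}, the following cyclic relation holds in the Fomin–Kirillov algebra E_n: the sum over i = 2, …, m of the product x_{a_1 a_i} x_{a_1 a_{i+1}} ⋯ x_{a_1 a_m} · x_{a_1 a_2} x_{a_1 a_3} ⋯ x_{a_1 a_i} equals 0. -/
open scoped TensorProduct

/-!
Write `Y_w = x_{ow}` for the fixed index `o = a₁` and, for a list `c` of indices, let
`S(c) = ∑ᵢ Y_{cᵢ} ⋯ Y_{c_K} · Y_{c₁} ⋯ Y_{cᵢ}` (`cyclicSum o c`). The three-term relation gives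
`x_{vu} Y_u = Y_v x_{vu} - Y_u Y_v`, and `x_{vu}` commutes with every `Y_w`, `w ∉ {o, u, v}`.
Pushing `x_{vu}` through the terms of `S(u :: t)` therefore yields
`S(u :: v :: t) = S(v :: t) x_{vu} - x_{vu} S(u :: t)`,
and `S` vanishes by induction on the length, starting from `S([u]) = Y_u² = 0`.
-/

namespace FK

variable {n : ℕ}

lemma x_mul_self (i j : Fin n) (h : i ≠ j) : x n i j * x n i j = 0 := by
  rw [x, ← map_mul, RingQuot.mkAlgHom_rel ℚ (Rel.square i j h), map_zero]

lemma x_swap (i j : Fin n) (h : i ≠ j) : x n j i = -x n i j := by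
  rw [x, x, RingQuot.mkAlgHom_rel ℚ (Rel.antisymm i j h), map_neg]

lemma commute_x (i j k l : Fin n) (h : List.Nodup [i, j, k, l]) :
    Commute (x n i j) (x n k l) := by
  rw [Commute, SemiconjBy, x, x, ← map_mul, ← map_mul,
    RingQuot.mkAlgHom_rel ℚ (Rel.comm i j k l h)]

lemma x_cyclic (i j k : Fin n) (h : List.Nodup [i, j, k]) :
    x n i j * x n j k + x n j k * x n k i + x n k i * x n i j = 0 := by
  rw [x, x, x, ← map_mul, ← map_mul, ← map_mul, ← map_add, ← map_add,
    RingQuot.mkAlgHom_rel ℚ (Rel.cyclic i j k h), map_zero]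

lemma x_mul_x_eq_sub {o u v : Fin n} (h : List.Nodup [o, u, v]) :
    x n v u * x n o u = x n o v * x n v u - x n o u * x n o v := by
  have hc := x_cyclic v u o (by simpa using List.nodup_reverse.mpr h)
  rw [x_swap o u (by simp_all), mul_neg (x n v u), neg_mul (x n o u)] at hc
  rw [← sub_eq_zero, ← neg_eq_zero, ← hc]
  abel

noncomputable def starWord (o : Fin n) (c : List (Fin n)) : E n := (c.map (x n o)).prod

@[simp] lemma starWord_nil (o : Fin n) : starWord o [] = 1 := rfl

@[simp] lemma starWord_cons (o k : Fin n) (c : List (Fin n)) :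
    starWord o (k :: c) = x n o k * starWord o c := by
  simp [starWord]

lemma commute_x_starWord {o u v : Fin n} {c : List (Fin n)} (h : ∀ k ∈ c, k ∉ [o, u, v])
    (huv : u ≠ v) (hou : o ≠ u) (hov : o ≠ v) : Commute (x n v u) (starWord o c) := by
  refine Commute.list_prod_right _ _ fun y hy => ?_
  obtain ⟨k, hk, rfl⟩ := List.mem_map.mp hy
  exact commute_x v u o k (by simp_all [eq_comm])

noncomputable def cyclicSum (o : Fin n) (c : List (Fin n)) : E n :=
  ∑ i ∈ Finset.range c.length, starWord o (c.drop i) * starWord o (c.take (i + 1))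

section Ring

variable {R : Type*} [Ring R] {z yu yv a b : R}

lemma mul_mul_mul_of_commute (ha : Commute z a) (hb : Commute z b)
    (h : z * yu = yv * z - yu * yv) :
    z * (a * (yu * b)) = a * (yv * b) * z - a * (yu * (yv * b)) :=
  calc z * (a * (yu * b)) = a * (z * yu * b) := by rw [← mul_assoc, ha.eq]; noncomm_ring
    _ = a * (yv * (z * b) - yu * yv * b) := by rw [h, sub_mul, mul_assoc]
    _ = a * (yv * b) * z - a * (yu * (yv * b)) := by rw [hb.eq]; noncomm_ring

lemma mul_mul_mul_self_of_commute (hb : Commute z b) (h : z * yu = yv * z - yu * yv) :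
    z * (yu * b * yu) = yv * b * yv * z - yv * b * (yu * yv) - yu * (yv * b) * yu :=
  calc z * (yu * b * yu) = yv * (z * b) * yu - yu * yv * b * yu := by
        rw [← mul_assoc, ← mul_assoc, h]; noncomm_ring
    _ = yv * b * (z * yu) - yu * yv * b * yu := by rw [hb.eq]; noncomm_ring
    _ = yv * b * yv * z - yv * b * (yu * yv) - yu * (yv * b) * yu := by rw [h]; noncomm_ring

end Ring

lemma cyclicSum_cons_cons {o u v : Fin n} {t : List (Fin n)} (h : (o :: u :: v :: t).Nodup) :
    cyclicSum o (u :: v :: t) =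
      cyclicSum o (v :: t) * x n v u - x n v u * cyclicSum o (u :: t) := by
  simp only [List.nodup_cons, List.mem_cons, not_or] at h
  obtain ⟨⟨hou, hov, hot⟩, ⟨huv, hut⟩, hvt, -⟩ := h
  have hcross := x_mul_x_eq_sub (o := o) (u := u) (v := v) (by simp [*])
  have hcomm (s : List (Fin n)) (hs : s ⊆ t) : Commute (x n v u) (starWord o s) :=
    commute_x_starWord (fun k hk => by grind) huv hou hov
  simp only [cyclicSum, List.length_cons, Finset.sum_range_succ', List.drop_succ_cons,
    List.take_succ_cons, List.drop_zero, List.take_zero, starWord_cons, starWord_nil, mul_one]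
  rw [mul_add, Finset.mul_sum, Finset.sum_congr rfl fun i _ => mul_mul_mul_of_commute
      (hcomm _ (List.drop_subset _ _)) (hcomm _ (List.take_subset _ _)) hcross,
    mul_mul_mul_self_of_commute (hcomm t (List.Subset.refl t)) hcross, Finset.sum_sub_distrib,
    add_mul, Finset.sum_mul]
  abel

lemma cyclicSum_eq_zero {o : Fin n} : ∀ {c : List (Fin n)}, (o :: c).Nodup → cyclicSum o c = 0
  | [], _ => by simp [cyclicSum]
  | [u], h => by simp [cyclicSum, x_mul_self o u (by simp_all)]
  | u :: v :: t, h => by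
    rw [cyclicSum_cons_cons h, cyclicSum_eq_zero (h.sublist (by simp)),
      cyclicSum_eq_zero (h.sublist (by simp)), zero_mul, mul_zero, sub_zero]
termination_by c => c.length

lemma cyclicSum_map_range' (o : Fin n) (a : ℕ → Fin n) (m : ℕ) :
    cyclicSum o ((List.range' 1 m).map a) = ∑ i ∈ Finset.Icc 1 m,
      ((List.range' i (m + 1 - i)).map fun k => x n o (a k)).prod *
        ((List.range' 1 i).map fun k => x n o (a k)).prod := by
  rw [cyclicSum, List.length_map, List.length_range', ← Finset.Ico_add_one_right_eq_Icc,
    Finset.sum_Ico_eq_sum_range, Nat.add_sub_cancel]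
  refine Finset.sum_congr rfl fun i hi => ?_
  rw [Finset.mem_range] at hi
  rw [starWord, starWord, ← List.map_drop, ← List.map_take, List.drop_range',
    List.take_range'_of_length_ge (by omega), List.map_map, List.map_map, mul_one,
    Nat.add_comm 1 i, Nat.add_sub_add_right]
  rfl

/-- Indices are shifted by one: `a₁, …, a_m` are `a 0, …, a (m-1)` and the summation index
`i = 2, …, m` becomes `i = 1, …, m-1`. -/
theorem stmt3_general (n m : ℕ) (a : ℕ → Fin n) (ha : Set.InjOn a (Set.Iio m)) :
    ∑ i ∈ Finset.Icc 1 (m - 1),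
      (((List.range' i (m - i)).map fun k => x n (a 0) (a k)).prod *
        ((List.range' 1 i).map fun k => x n (a 0) (a k)).prod) = 0 := by
  obtain _ | m := m
  · simp
  have hnodup : (a 0 :: (List.range' 1 m).map a).Nodup := by
    have hrange : List.range' 0 (m + 1) = 0 :: List.range' 1 m := List.range'_succ
    rw [← List.map_cons, ← hrange]
    exact List.Nodup.map_on (fun i hi j hj => ha (by simpa using hi) (by simpa using hj))
      List.nodup_range'
  rw [Nat.add_sub_cancel, ← cyclicSum_map_range', cyclicSum_eq_zero hnodup]

/-- cyclic relations, [FK, Lemma 7.2]: for `3 ≤ m ≤ n` and distinct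
`a₁, …, a_m` (here `a 0, …, a (m-1)`), the sum over `i = 2, …, m` (here `i = 1, …, m-1`) of
`x_{a₁a_i} x_{a₁a_{i+1}} ⋯ x_{a₁a_m} · x_{a₁a_2} x_{a₁a_3} ⋯ x_{a₁a_i}` vanishes in `E n`. -/
theorem stmt3 (n m : ℕ) (hn : 3 ≤ n) (hm : 3 ≤ m) (hmn : m ≤ n)
    (a : ℕ → Fin n) (ha : Set.InjOn a (Set.Iio m)) :
    ∑ i ∈ Finset.Icc 1 (m - 1),
      (((List.range' i (m - i)).map fun k => x n (a 0) (a k)).prod *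
        ((List.range' 1 i).map fun k => x n (a 0) (a k)).prod) = 0 :=
  stmt3_general n m a ha

end FK
end

section
/- Let G₁ be a simple graph on vertex set {1,…,n} and let G₂ be its complement. Then for every d ≥ 0, every element of the left ideal E_n·E_{G₁}⁺ that is homogeneous of degree d pairs to zero under ⟨·,·⟩ with every element of E_{G₂} homogeneous of degree d. (Here E_n·E_{G₁}⁺ denotes the span of products P·h with P ∈ E_n and h ∈ E_{G₁}⁺.) -/
open scoped TensorProduct

namespace FK

/-- The left ideal `E_n · E_G⁺` of `E n`. -/
def leftIdeal (n : ℕ) (G : SimpleGraph (Fin n)) : Submodule ℚ (E n) :=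
  Submodule.span ℚ {y | ∃ p : E n, ∃ h ∈ EGplus n G, y = p * h}

/-! For an edge `ab` of `G₁`, `Δ_{ab}` kills every generator of `E_{G₁ᶜ}`, hence, by the twisted
Leibniz rule, all of `E_{G₁ᶜ}`. So `h ∈ E_{G₁}` acts on `E_{G₁ᶜ}` as the scalar `ε(h)` given by the
augmentation `ε`, which vanishes on `E_{G₁}⁺`; then `Δ_{ph} Q = Δ_p (Δ_h Q) = 0`. -/

noncomputable def counit (n : ℕ) : E n →ₐ[ℚ] ℚ :=
  RingQuot.liftAlgHom ℚ ⟨FreeAlgebra.lift ℚ fun _ => (0 : ℚ), by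
    intro a b r
    induction r <;> simp⟩

theorem counit_x (n : ℕ) (i j : Fin n) : counit n (x n i j) = 0 := by
  simp [counit, x, RingQuot.liftAlgHom_mkAlgHom_apply]

theorem counit_eq_zero_of_mem_degSpan {n d : ℕ} (hd : 1 ≤ d) {y : E n}
    (hy : y ∈ degSpan n d) : counit n y = 0 := by
  change y ∈ LinearMap.ker (counit n).toLinearMap
  refine (Submodule.span_le.mpr ?_) hy
  rintro _ ⟨_ | ⟨p, l⟩, -, hlen, rfl⟩
  · simp at hlen; omega
  · simp [word, counit_x]

theorem EGplus_le (n : ℕ) (G : SimpleGraph (Fin n)) :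
    EGplus n G ≤ (EG n G).toSubmodule ⊓ LinearMap.ker (counit n).toLinearMap :=
  iSup_le fun _ => iSup_le fun hd => inf_le_inf_left _ fun _ hy =>
    counit_eq_zero_of_mem_degSpan hd hy

theorem IsDelta.apply_eq_zero_of_mem_EG {n : ℕ} {σ : E n →ₐ[ℚ] E n} {a b : Fin n}
    {D : E n →ₗ[ℚ] E n} (hD : IsDelta n σ a b D) {H : SimpleGraph (Fin n)}
    (hab : ¬H.Adj a b) {Q : E n} (hQ : Q ∈ EG n H) : D Q = 0 := by
  obtain ⟨h1, hgen, hmul⟩ := hD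
  induction hQ using Algebra.adjoin_induction with
  | mem q hq =>
    obtain ⟨i, j, hij, rfl⟩ := hq
    rw [hgen i j hij.ne, if_neg, if_neg]
    · rintro ⟨rfl, rfl⟩; exact hab hij.symm
    · rintro ⟨rfl, rfl⟩; exact hab hij
  | algebraMap _ => rw [Algebra.algebraMap_eq_smul_one, map_smul, h1, smul_zero]
  | add p q _ _ hp hq => rw [map_add, hp, hq, add_zero]
  | mul p q _ _ hp hq => rw [hmul, hp, hq, zero_mul, mul_zero, add_zero]

theorem apply_eq_counit_smul_of_mem_EG {n : ℕ} {σ : Fin n → Fin n → (E n →ₐ[ℚ] E n)}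
    {Δ : E n →ₐ[ℚ] Module.End ℚ (E n)}
    (hΔ : ∀ a b : Fin n, a ≠ b → IsDelta n (σ a b) a b (Δ (x n a b)))
    {G : SimpleGraph (Fin n)} {Q : E n} (hQ : Q ∈ EG n Gᶜ) {h : E n} (hh : h ∈ EG n G) :
    Δ h Q = counit n h • Q := by
  induction hh using Algebra.adjoin_induction with
  | mem q hq =>
    obtain ⟨i, j, hij, rfl⟩ := hq
    rw [(hΔ i j hij.ne).apply_eq_zero_of_mem_EG (fun h : Gᶜ.Adj i j => h.2 hij) hQ,
      counit_x, zero_smul]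
  | algebraMap _ =>
    rw [AlgHom.commutes, AlgHom.commutes, Module.algebraMap_end_apply,
      Algebra.algebraMap_self_apply]
  | add p q _ _ hp hq => rw [map_add, LinearMap.add_apply, hp, hq, map_add, add_smul]
  | mul p q _ _ hp hq =>
    rw [map_mul, Module.End.mul_apply, hq, map_smul, hp, map_mul, smul_smul, mul_comm]

theorem stmt4_general (n : ℕ)
    (σ : Fin n → Fin n → (E n →ₐ[ℚ] E n))
    (Δ : E n →ₐ[ℚ] Module.End ℚ (E n))
    (hΔ : ∀ a b : Fin n, a ≠ b → IsDelta n (σ a b) a b (Δ (x n a b)))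
    (G₁ : SimpleGraph (Fin n)) (d : ℕ)
    (P : E n) (hP : P ∈ leftIdeal n G₁ ⊓ degSpan n d)
    (Q : E n) (hQ : Q ∈ EGdeg n G₁ᶜ d) :
    Δ P Q = 0 := by
  obtain ⟨hP, -⟩ := hP
  induction hP using Submodule.span_induction with
  | mem _ hy =>
    obtain ⟨p, h, hh, rfl⟩ := hy
    obtain ⟨hhG, hh0⟩ := EGplus_le n G₁ hh
    rw [map_mul, Module.End.mul_apply, apply_eq_counit_smul_of_mem_EG hΔ hQ.1 hhG,
      show counit n h = 0 from hh0, zero_smul, map_zero]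
  | zero => rw [map_zero, LinearMap.zero_apply]
  | add _ _ _ _ h₁ h₂ => rw [map_add, LinearMap.add_apply, h₁, h₂, add_zero]
  | smul _ _ _ h => rw [map_smul, LinearMap.smul_apply, h, smul_zero]

/-- let `G₁` be a graph on `n` vertices and `G₂ = G₁ᶜ` its complement.  Every
element of the left ideal `E_n·E_{G₁}⁺` homogeneous of degree `d` pairs to zero under
`⟨·,·⟩` with every element of `E_{G₂}` homogeneous of degree `d`; equivalently
`Δ_P(Q) = 0` for all such `P`, `Q`, where `P ↦ Δ_P` is the algebra homomorphism
`E n → End(E n)` extending the operators `Δ_{ab}`. -/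
theorem stmt4 (n : ℕ) (hn : 1 ≤ n)
    (σ : Fin n → Fin n → (E n →ₐ[ℚ] E n))
    (hσ : ∀ a b i j : Fin n,
      σ a b (x n i j) = x n (Equiv.swap a b i) (Equiv.swap a b j))
    (Δ : E n →ₐ[ℚ] Module.End ℚ (E n))
    (hΔ : ∀ a b : Fin n, a ≠ b → IsDelta n (σ a b) a b (Δ (x n a b)))
    (G₁ : SimpleGraph (Fin n)) (d : ℕ)
    (P : E n) (hP : P ∈ leftIdeal n G₁ ⊓ degSpan n d)
    (Q : E n) (hQ : Q ∈ EGdeg n G₁ᶜ d) :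
    Δ P Q = 0 :=
  stmt4_general n σ Δ hΔ G₁ d P hP Q hQ

end FK
end

section
/- Let G be a simple graph on {1,…,n} and let w ∈ E_G be nonzero. If x_{ij}·w = 0 for some 1 ≤ i < j ≤ n, then {i,j} is an edge of G; similarly, if w·x_{ij} = 0, then {i,j} is an edge of G. (I.e., the left and right descent sets of any nonzero element of E_G are contained in G.) -/
open scoped TensorProduct

namespace FK

set_option synthInstance.maxHeartbeats 1000000
set_option maxHeartbeats 1600000

namespace Stmt15

/-- Generic data: a family of elements of a `ℚ`-algebra satisfying the Fomin–Kirillov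
relations. -/
structure FKX (A : Type) [Ring A] [Algebra ℚ A] (n : ℕ) where
  X : Fin n × Fin n → A
  diag : ∀ m, X (m, m) = 0
  anti : ∀ k l, X (l, k) = -X (k, l)
  sq : ∀ k l, X (k, l) * X (k, l) = 0
  comm : ∀ k l m o : Fin n, k ≠ l → k ≠ m → k ≠ o → l ≠ m → l ≠ o → m ≠ o →
    X (k, l) * X (m, o) = X (m, o) * X (k, l)
  cyc : ∀ a b c : Fin n, a ≠ b → a ≠ c → b ≠ c →
    X (a, b) * X (b, c) + X (b, c) * X (c, a) + X (c, a) * X (a, b) = 0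

variable {A : Type} [Ring A] [Algebra ℚ A] {n : ℕ}

/-- The "shift" operator modelling left multiplication by `x_{ij}`. -/
def SS : (A × A) →ₗ[ℚ] (A × A) :=
  LinearMap.prod 0 (LinearMap.fst ℚ A A)

@[simp] theorem SS_apply (m : A × A) : (SS : (A × A) →ₗ[ℚ] (A × A)) m = (0, m.1) := by
  simp [SS]

/-- Classification of a pair w.r.t. `{i, j}`. -/
theorem pairCases {n : ℕ} {i j : Fin n} (hij : i ≠ j) (k l : Fin n) (hkl : k ≠ l) :
    (k = i ∧ l = j) ∨ (k = j ∧ l = i)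
    ∨ (k ≠ i ∧ k ≠ j ∧ l ≠ i ∧ l ≠ j)
    ∨ (l = i ∧ k ≠ i ∧ k ≠ j) ∨ (k = i ∧ l ≠ i ∧ l ≠ j)
    ∨ (l = j ∧ k ≠ i ∧ k ≠ j) ∨ (k = j ∧ l ≠ i ∧ l ≠ j) := by
  by_cases h1 : k = i
  · subst h1
    by_cases h2 : l = j
    · exact Or.inl ⟨rfl, h2⟩
    · exact Or.inr (Or.inr (Or.inr (Or.inr (Or.inl ⟨rfl, Ne.symm hkl, h2⟩))))
  · by_cases h2 : k = j
    · subst h2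
      by_cases h3 : l = i
      · exact Or.inr (Or.inl ⟨rfl, h3⟩)
      · exact Or.inr (Or.inr (Or.inr (Or.inr (Or.inr (Or.inr ⟨rfl, h3, Ne.symm hkl⟩)))))
    · by_cases h3 : l = i
      · exact Or.inr (Or.inr (Or.inr (Or.inl ⟨h3, h1, h2⟩)))
      · by_cases h4 : l = j
        · exact Or.inr (Or.inr (Or.inr (Or.inr (Or.inr (Or.inl ⟨h4, h1, h2⟩)))))
        · exact Or.inr (Or.inr (Or.inl ⟨h1, h2, h3, h4⟩))


namespace FKX

variable (D : FKX A n) (i j : Fin n)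

/-- The swap-twisted generator. -/
def TT (p : Fin n × Fin n) : A := D.X (Equiv.swap i j p.1, Equiv.swap i j p.2)

/-- The quadratic correction term. -/
def CC (p : Fin n × Fin n) : A :=
  if p.2 = i ∨ p.1 = j then D.TT i j p * D.X p else -(D.TT i j p * D.X p)

/-- The operator modelling left multiplication by a generator other than `±x_{ij}`. -/
def gen (p : Fin n × Fin n) : (A × A) →ₗ[ℚ] (A × A) :=
  LinearMap.prod
    ((LinearMap.mulLeft ℚ (D.X p)).comp (LinearMap.fst ℚ A A)
      + (LinearMap.mulLeft ℚ (D.CC i j p)).comp (LinearMap.snd ℚ A A))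
    ((LinearMap.mulLeft ℚ (D.TT i j p)).comp (LinearMap.snd ℚ A A))

/-- The representation of the generators. -/
def rho (p : Fin n × Fin n) : (A × A) →ₗ[ℚ] (A × A) :=
  if p = (i, j) then SS else if p = (j, i) then -SS else D.gen i j p

@[simp] theorem gen_apply (p : Fin n × Fin n) (m : A × A) :
    D.gen i j p m = (D.X p * m.1 + D.CC i j p * m.2, D.TT i j p * m.2) := by
  simp [gen]

variable {i j}

section Shapes

theorem TT_far {a b : Fin n} (ha1 : a ≠ i) (ha2 : a ≠ j) (hb1 : b ≠ i) (hb2 : b ≠ j) :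
    D.TT i j (a, b) = D.X (a, b) := by
  simp [TT, Equiv.swap_apply_of_ne_of_ne, ha1, ha2, hb1, hb2]

theorem CC_far {a b : Fin n} (ha1 : a ≠ i) (ha2 : a ≠ j) (hb1 : b ≠ i) (hb2 : b ≠ j) :
    D.CC i j (a, b) = 0 := by
  simp [CC, D.TT_far ha1 ha2 hb1 hb2, hb1, ha2, D.sq]

theorem TT_ci {c : Fin n} (h1 : c ≠ i) (h2 : c ≠ j) : D.TT i j (c, i) = D.X (c, j) := by
  simp [TT, Equiv.swap_apply_of_ne_of_ne, h1, h2]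

theorem CC_ci {c : Fin n} (h1 : c ≠ i) (h2 : c ≠ j) :
    D.CC i j (c, i) = D.X (c, j) * D.X (c, i) := by
  simp [CC, D.TT_ci h1 h2]

theorem TT_ic {c : Fin n} (h1 : c ≠ i) (h2 : c ≠ j) : D.TT i j (i, c) = D.X (j, c) := by
  simp [TT, Equiv.swap_apply_of_ne_of_ne, h1, h2]

theorem CC_ic (hij : i ≠ j) {c : Fin n} (h1 : c ≠ i) (h2 : c ≠ j) :
    D.CC i j (i, c) = -(D.X (j, c) * D.X (i, c)) := by
  simp [CC, D.TT_ic h1 h2, h1, hij]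

theorem TT_cj {c : Fin n} (h1 : c ≠ i) (h2 : c ≠ j) : D.TT i j (c, j) = D.X (c, i) := by
  simp [TT, Equiv.swap_apply_of_ne_of_ne, h1, h2]

theorem CC_cj (hij : i ≠ j) {c : Fin n} (h1 : c ≠ i) (h2 : c ≠ j) :
    D.CC i j (c, j) = -(D.X (c, i) * D.X (c, j)) := by
  simp [CC, D.TT_cj h1 h2, h2, Ne.symm hij]

theorem TT_jc {c : Fin n} (h1 : c ≠ i) (h2 : c ≠ j) : D.TT i j (j, c) = D.X (i, c) := by
  simp [TT, Equiv.swap_apply_of_ne_of_ne, h1, h2]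

theorem CC_jc {c : Fin n} (h1 : c ≠ i) (h2 : c ≠ j) :
    D.CC i j (j, c) = D.X (i, c) * D.X (j, c) := by
  simp [CC, D.TT_jc h1 h2]

theorem TT_e : D.TT i j (i, j) = D.X (j, i) := by simp [TT]

theorem TT_e' : D.TT i j (j, i) = D.X (i, j) := by simp [TT]

theorem CC_e (hij : i ≠ j) : D.CC i j (i, j) = 0 := by
  rw [CC, if_neg (show ¬((i,j).2 = i ∨ (i,j).1 = j) by simp [hij, Ne.symm hij]),
    TT_e, D.anti i j, neg_mul, neg_neg, D.sq]

theorem CC_e' (hij : i ≠ j) : D.CC i j (j, i) = 0 := by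
  rw [CC, if_pos (show (j,i).2 = i ∨ (j,i).1 = j from Or.inl rfl),
    TT_e', D.anti i j, mul_neg, D.sq, neg_zero]

theorem TT_flip (k l : Fin n) : D.TT i j (l, k) = -D.TT i j (k, l) :=
  D.anti (Equiv.swap i j k) (Equiv.swap i j l)

theorem X_diag' {a b : Fin n} (h : a = b) : D.X (a, b) = 0 := by subst h; exact D.diag a

theorem CC_flip (hij : i ≠ j) (k l : Fin n) : D.CC i j (l, k) = -D.CC i j (k, l) := by
  by_cases c1 : k = i ∨ l = j <;> by_cases c2 : l = i ∨ k = j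
  · -- both conditions true: the pair is degenerate, everything is zero
    have hX : D.X (k, l) = 0 := by
      rcases c1 with h1 | h1 <;> rcases c2 with h2 | h2
      · exact D.X_diag' (h1.trans h2.symm)
      · exact absurd (h1.symm.trans h2) hij
      · exact absurd (h2.symm.trans h1) hij
      · exact D.X_diag' (h2.trans h1.symm)
    have hX' : D.X (l, k) = 0 := by rw [D.anti, hX, neg_zero]
    simp only [CC]
    rw [if_pos (show (l,k).2 = i ∨ (l,k).1 = j from c1), if_pos (show (k,l).2 = i ∨ (k,l).1 = j from c2),
      hX, hX', mul_zero, mul_zero, neg_zero]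
  · simp only [CC]
    rw [if_pos (show (l,k).2 = i ∨ (l,k).1 = j from c1), if_neg (show ¬((k,l).2 = i ∨ (k,l).1 = j) from c2),
      D.anti k l, D.TT_flip, neg_neg, neg_mul, mul_neg, neg_neg]
  · simp only [CC]
    rw [if_neg (show ¬((l,k).2 = i ∨ (l,k).1 = j) from c1), if_pos (show (k,l).2 = i ∨ (k,l).1 = j from c2),
      D.anti k l, D.TT_flip, neg_mul, mul_neg, neg_neg]
  · push_neg at c1 c2
    obtain ⟨h1, h2⟩ := c1
    obtain ⟨h3, h4⟩ := c2
    rw [D.CC_far h3 h2 h1 h4, D.CC_far h1 h4 h3 h2, neg_zero]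

theorem X_flip (k l : Fin n) : D.X (l, k) = -D.X (k, l) := D.anti k l

theorem gen_flip (hij : i ≠ j) (k l : Fin n) : D.gen i j (l, k) = -D.gen i j (k, l) := by
  refine LinearMap.ext fun m => ?_
  simp only [gen_apply, LinearMap.neg_apply, D.X_flip k l, D.TT_flip k l, D.CC_flip hij k l,
    Prod.neg_mk, Prod.mk.injEq]
  constructor <;> noncomm_ring

theorem rho_e : D.rho i j (i, j) = SS := by rw [rho, if_pos rfl]

theorem rho_e' (hij : i ≠ j) : D.rho i j (j, i) = -SS := by
  rw [rho, if_neg (by simp [Prod.ext_iff, Ne.symm hij]), if_pos rfl]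

theorem rho_gen {k l : Fin n} (h1 : (k, l) ≠ (i, j)) (h2 : (k, l) ≠ (j, i)) :
    D.rho i j (k, l) = D.gen i j (k, l) := by
  rw [rho, if_neg h1, if_neg h2]

theorem rho_flip (hij : i ≠ j) (k l : Fin n) : D.rho i j (l, k) = -D.rho i j (k, l) := by
  by_cases h1 : k = i ∧ l = j
  · obtain ⟨rfl, rfl⟩ := h1
    rw [D.rho_e' hij, D.rho_e]
  · by_cases h2 : k = j ∧ l = i
    · obtain ⟨rfl, rfl⟩ := h2
      rw [D.rho_e, D.rho_e' hij, neg_neg]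
    · have e1 : (k, l) ≠ (i, j) := by simp [Prod.ext_iff]; intro hk hl; exact h1 ⟨hk, hl⟩
      have e2 : (k, l) ≠ (j, i) := by simp [Prod.ext_iff]; intro hk hl; exact h2 ⟨hk, hl⟩
      have e1' : (l, k) ≠ (i, j) := by simp [Prod.ext_iff]; intro hl hk; exact h2 ⟨hk, hl⟩
      have e2' : (l, k) ≠ (j, i) := by simp [Prod.ext_iff]; intro hl hk; exact h1 ⟨hk, hl⟩
      rw [D.rho_gen e1' e2', D.rho_gen e1 e2]
      exact D.gen_flip hij k l

end Shapes
section Identities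

/-- `u(vu) + (vu)v = 0` for `u = X_ci, v = X_cj`. -/
theorem sqI (hij : i ≠ j) {c : Fin n} (h1 : c ≠ i) (h2 : c ≠ j) :
    D.X (c, i) * (D.X (c, j) * D.X (c, i)) + D.X (c, j) * D.X (c, i) * D.X (c, j) = 0 := by
  have h := D.cyc c i j h1 h2 hij
  rw [D.anti c j] at h
  have hu := D.sq c i
  have hv := D.sq c j
  linear_combination (norm := noncomm_ring)
    (-(D.X (c, i))) * h - h * D.X (c, j) + hu * D.X (i, j) - D.X (i, j) * hv

theorem TT_sq (k l : Fin n) : D.TT i j (k, l) * D.TT i j (k, l) = 0 := D.sq _ _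

/-- The middle identity for the square relation. -/
theorem Msq (hij : i ≠ j) {k l : Fin n} (hkl : k ≠ l) :
    D.X (k, l) * D.CC i j (k, l) + D.CC i j (k, l) * D.TT i j (k, l) = 0 := by
  rcases pairCases hij k l hkl with ⟨rfl, rfl⟩ | ⟨rfl, rfl⟩ | ⟨h1, h2, h3, h4⟩ |
    ⟨rfl, h1, h2⟩ | ⟨rfl, h1, h2⟩ | ⟨rfl, h1, h2⟩ | ⟨rfl, h1, h2⟩
  · rw [D.CC_e hij]; simp
  · rw [D.CC_e' hij]; simp
  · rw [D.CC_far h1 h2 h3 h4]; simp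
  · -- (k, i)
    rw [D.CC_ci h1 h2, D.TT_ci h1 h2]
    linear_combination (norm := noncomm_ring) D.sqI hij h1 h2
  · -- (i, l)
    rw [D.CC_ic hij h1 h2, D.TT_ic h1 h2, D.anti l k, D.anti l j]
    linear_combination (norm := noncomm_ring) D.sqI hij h1 h2
  · -- (k, j)
    rw [D.CC_cj hij h1 h2, D.TT_cj h1 h2]
    linear_combination (norm := noncomm_ring) -(D.sqI hij h1 h2)
  · -- (j, l)
    rw [D.CC_jc h1 h2, D.TT_jc h1 h2, D.anti l i, D.anti l k]
    linear_combination (norm := noncomm_ring) -(D.sqI hij h1 h2)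

theorem rho_sq (hij : i ≠ j) {k l : Fin n} (hkl : k ≠ l) :
    D.rho i j (k, l) * D.rho i j (k, l) = 0 := by
  by_cases h1 : (k, l) = (i, j)
  · rw [h1, D.rho_e]
    refine LinearMap.ext fun m => ?_
    simp [Module.End.mul_apply]
  · by_cases h2 : (k, l) = (j, i)
    · rw [h2, D.rho_e' hij]
      refine LinearMap.ext fun m => ?_
      simp [Module.End.mul_apply]
    · rw [D.rho_gen h1 h2]
      refine LinearMap.ext fun m => ?_
      simp only [Module.End.mul_apply, gen_apply, LinearMap.zero_apply,
        ← Prod.mk_zero_zero, Prod.mk.injEq]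
      constructor
      · linear_combination (norm := noncomm_ring)
          (D.sq k l) * m.1 + (D.Msq hij hkl) * m.2
      · linear_combination (norm := noncomm_ring) (D.TT_sq (i := i) (j := j) k l) * m.2

end Identities
section Comm

variable (i j) in
/-- The cross-term identity needed for the commutation relation. -/
abbrev NCeq (a b c d : Fin n) : Prop :=
  D.X (a, b) * D.CC i j (c, d) + D.CC i j (a, b) * D.TT i j (c, d)
    = D.X (c, d) * D.CC i j (a, b) + D.CC i j (c, d) * D.TT i j (a, b)

theorem NC_symm {a b c d : Fin n} (h : D.NCeq i j a b c d) : D.NCeq i j c d a b := h.symm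

theorem NC_flip1 (hij : i ≠ j) {a b c d : Fin n} (h : D.NCeq i j a b c d) :
    D.NCeq i j b a c d := by
  unfold NCeq at h ⊢
  rw [D.anti a b, D.CC_flip hij a b, D.TT_flip a b]
  linear_combination (norm := noncomm_ring) -h

theorem NC_flip2 (hij : i ≠ j) {a b c d : Fin n} (h : D.NCeq i j a b c d) :
    D.NCeq i j a b d c :=
  D.NC_symm (D.NC_flip1 hij (D.NC_symm h))

theorem NC_far_far {a b c d : Fin n} (ha1 : a ≠ i) (ha2 : a ≠ j) (hb1 : b ≠ i) (hb2 : b ≠ j)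
    (hc1 : c ≠ i) (hc2 : c ≠ j) (hd1 : d ≠ i) (hd2 : d ≠ j) : D.NCeq i j a b c d := by
  unfold NCeq
  rw [D.CC_far ha1 ha2 hb1 hb2, D.CC_far hc1 hc2 hd1 hd2]
  simp

theorem NC_e_far (hij : i ≠ j) {c d : Fin n}
    (hc1 : c ≠ i) (hc2 : c ≠ j) (hd1 : d ≠ i) (hd2 : d ≠ j) : D.NCeq i j i j c d := by
  unfold NCeq
  rw [D.CC_e hij, D.CC_far hc1 hc2 hd1 hd2]
  simp

theorem NC_ci_far {a c d : Fin n} (ha1 : a ≠ i) (ha2 : a ≠ j)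
    (hc1 : c ≠ i) (hc2 : c ≠ j) (hd1 : d ≠ i) (hd2 : d ≠ j)
    (hac : a ≠ c) (had : a ≠ d) (hcd : c ≠ d) : D.NCeq i j a i c d := by
  unfold NCeq
  rw [D.CC_ci ha1 ha2, D.CC_far hc1 hc2 hd1 hd2, D.TT_far hc1 hc2 hd1 hd2, D.TT_ci ha1 ha2]
  have h1 := D.comm a j c d ha2 hac had (Ne.symm hc2) (Ne.symm hd2) hcd
  have h2 := D.comm a i c d ha1 hac had (Ne.symm hc1) (Ne.symm hd1) hcd
  linear_combination (norm := noncomm_ring) D.X (a, j) * h2 + h1 * D.X (a, i)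

theorem NC_cj_far {a c d : Fin n} (ha1 : a ≠ i) (ha2 : a ≠ j)
    (hc1 : c ≠ i) (hc2 : c ≠ j) (hd1 : d ≠ i) (hd2 : d ≠ j)
    (hac : a ≠ c) (had : a ≠ d) (hcd : c ≠ d) (hij : i ≠ j) : D.NCeq i j a j c d := by
  unfold NCeq
  rw [D.CC_cj hij ha1 ha2, D.CC_far hc1 hc2 hd1 hd2, D.TT_far hc1 hc2 hd1 hd2,
    D.TT_cj ha1 ha2]
  have h1 := D.comm a j c d ha2 hac had (Ne.symm hc2) (Ne.symm hd2) hcd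
  have h2 := D.comm a i c d ha1 hac had (Ne.symm hc1) (Ne.symm hd1) hcd
  linear_combination (norm := noncomm_ring) (-(D.X (a, i))) * h1 - h2 * D.X (a, j)

/-- IDENTITY-C: the genuinely quadratic case of commutation. -/
theorem NC_ci_cj (hij : i ≠ j) {c d : Fin n} (hc1 : c ≠ i) (hc2 : c ≠ j)
    (hd1 : d ≠ i) (hd2 : d ≠ j) (hcd : c ≠ d) : D.NCeq i j c i d j := by
  unfold NCeq
  rw [D.CC_cj hij hd1 hd2, D.TT_cj hd1 hd2, D.CC_ci hc1 hc2, D.TT_ci hc1 hc2]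
  have h6 := D.cyc j c i (Ne.symm hc2) (Ne.symm hij) hc1
  rw [D.anti c j] at h6
  have h7 := D.cyc i d j (Ne.symm hd1) hij hd2
  rw [D.anti d i, D.anti i j] at h7
  have hAE := D.comm c i d j hc1 hcd hc2 hd1.symm hij hd2
  have hBF := D.comm d i c j hd1 hcd.symm hd2 hc1.symm hij hc2
  linear_combination (norm := noncomm_ring)
    -(h6 * D.X (d, i)) + D.X (c, i) * h7 + D.X (d, j) * h6 - h7 * D.X (c, j)
      + D.X (i, j) * hBF + hAE * D.X (i, j)

theorem NC_any_far (hij : i ≠ j) {k l c d : Fin n} (hkl : k ≠ l)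
    (hc1 : c ≠ i) (hc2 : c ≠ j) (hd1 : d ≠ i) (hd2 : d ≠ j)
    (hkc : k ≠ c) (hkd : k ≠ d) (hlc : l ≠ c) (hld : l ≠ d) (hcd : c ≠ d) :
    D.NCeq i j k l c d := by
  rcases pairCases hij k l hkl with ⟨he1, he2⟩ | ⟨he1, he2⟩ | ⟨h1, h2, h3, h4⟩ |
    ⟨he, h1, h2⟩ | ⟨he, h1, h2⟩ | ⟨he, h1, h2⟩ | ⟨he, h1, h2⟩
  · rw [he1, he2]; exact D.NC_e_far hij hc1 hc2 hd1 hd2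
  · rw [he1, he2]; exact D.NC_flip1 hij (D.NC_e_far hij hc1 hc2 hd1 hd2)
  · exact D.NC_far_far h1 h2 h3 h4 hc1 hc2 hd1 hd2
  · rw [he]; exact D.NC_ci_far h1 h2 hc1 hc2 hd1 hd2 hkc hkd hcd
  · rw [he]; exact D.NC_flip1 hij (D.NC_ci_far h1 h2 hc1 hc2 hd1 hd2 hlc hld hcd)
  · rw [he]; exact D.NC_cj_far h1 h2 hc1 hc2 hd1 hd2 hkc hkd hcd hij
  · rw [he]; exact D.NC_flip1 hij (D.NC_cj_far h1 h2 hc1 hc2 hd1 hd2 hlc hld hcd hij)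

theorem NC_ci_any (hij : i ≠ j) {a c d : Fin n} (ha1 : a ≠ i) (ha2 : a ≠ j)
    (hc1 : c ≠ i) (hd1 : d ≠ i) (hac : a ≠ c) (had : a ≠ d) (hcd : c ≠ d) :
    D.NCeq i j a i c d := by
  by_cases hc2 : c = j
  · rw [hc2]
    have hd2 : d ≠ j := fun h => hcd (hc2.trans h.symm)
    exact D.NC_flip2 hij (D.NC_ci_cj hij ha1 ha2 hd1 hd2 had)
  · by_cases hd2 : d = j
    · rw [hd2]
      exact D.NC_ci_cj hij ha1 ha2 hc1 hc2 hac
    · exact D.NC_ci_far ha1 ha2 hc1 hc2 hd1 hd2 hac had hcd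

theorem NC_cj_any (hij : i ≠ j) {a c d : Fin n} (ha1 : a ≠ i) (ha2 : a ≠ j)
    (hc2 : c ≠ j) (hd2 : d ≠ j) (hac : a ≠ c) (had : a ≠ d) (hcd : c ≠ d) :
    D.NCeq i j a j c d := by
  by_cases hc1 : c = i
  · rw [hc1]
    have hd1 : d ≠ i := fun h => hcd (hc1.trans h.symm)
    exact D.NC_flip2 hij (D.NC_symm (D.NC_ci_cj hij hd1 hd2 ha1 ha2 had.symm))
  · by_cases hd1 : d = i
    · rw [hd1]
      exact D.NC_symm (D.NC_ci_cj hij hc1 hc2 ha1 ha2 hac.symm)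
    · exact D.NC_cj_far ha1 ha2 hc1 hc2 hd1 hd2 hac had hcd hij

theorem Ncomm (hij : i ≠ j) {a b c d : Fin n} (h1 : a ≠ b) (h2 : a ≠ c) (h3 : a ≠ d)
    (h4 : b ≠ c) (h5 : b ≠ d) (h6 : c ≠ d) : D.NCeq i j a b c d := by
  rcases pairCases hij a b h1 with ⟨he1, he2⟩ | ⟨he1, he2⟩ | ⟨g1, g2, g3, g4⟩ |
    ⟨he, g1, g2⟩ | ⟨he, g1, g2⟩ | ⟨he, g1, g2⟩ | ⟨he, g1, g2⟩
  · -- (a,b) = (i,j)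
    rw [he1, he2]
    exact D.NC_e_far hij (he1 ▸ h2.symm) (he2 ▸ h4.symm) (he1 ▸ h3.symm) (he2 ▸ h5.symm)
  · -- (a,b) = (j,i)
    rw [he1, he2]
    exact D.NC_flip1 hij
      (D.NC_e_far hij (he2 ▸ h4.symm) (he1 ▸ h2.symm) (he2 ▸ h5.symm) (he1 ▸ h3.symm))
  · -- (a,b) far
    exact D.NC_symm (D.NC_any_far hij h6 g1 g2 g3 g4 h2.symm h4.symm h3.symm h5.symm h1)
  · -- b = i
    rw [he]
    exact D.NC_ci_any hij g1 g2 (he ▸ h4.symm) (he ▸ h5.symm) h2 h3 h6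
  · -- a = i
    rw [he]
    exact D.NC_flip1 hij
      (D.NC_ci_any hij g1 g2 (he ▸ h2.symm) (he ▸ h3.symm) h4 h5 h6)
  · -- b = j
    rw [he]
    exact D.NC_cj_any hij g1 g2 (he ▸ h4.symm) (he ▸ h5.symm) h2 h3 h6
  · -- a = j
    rw [he]
    exact D.NC_flip1 hij
      (D.NC_cj_any hij g1 g2 (he ▸ h2.symm) (he ▸ h3.symm) h4 h5 h6)

theorem TT_comm {k l m o : Fin n} (h1 : k ≠ l) (h2 : k ≠ m) (h3 : k ≠ o)
    (h4 : l ≠ m) (h5 : l ≠ o) (h6 : m ≠ o) :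
    D.TT i j (k, l) * D.TT i j (m, o) = D.TT i j (m, o) * D.TT i j (k, l) :=
  D.comm _ _ _ _ ((Equiv.swap i j).injective.ne h1) ((Equiv.swap i j).injective.ne h2)
    ((Equiv.swap i j).injective.ne h3) ((Equiv.swap i j).injective.ne h4)
    ((Equiv.swap i j).injective.ne h5) ((Equiv.swap i j).injective.ne h6)

theorem genComm (hij : i ≠ j) {a b c d : Fin n} (h1 : a ≠ b) (h2 : a ≠ c) (h3 : a ≠ d)
    (h4 : b ≠ c) (h5 : b ≠ d) (h6 : c ≠ d) :
    D.gen i j (a, b) * D.gen i j (c, d) = D.gen i j (c, d) * D.gen i j (a, b) := by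
  refine LinearMap.ext fun m => ?_
  simp only [Module.End.mul_apply, gen_apply, Prod.mk.injEq]
  constructor
  · linear_combination (norm := noncomm_ring)
      (D.comm a b c d h1 h2 h3 h4 h5 h6) * m.1 + (D.Ncomm hij h1 h2 h3 h4 h5 h6) * m.2
  · linear_combination (norm := noncomm_ring) (D.TT_comm h1 h2 h3 h4 h5 h6) * m.2

theorem SGfar {c d : Fin n} (hc1 : c ≠ i) (hc2 : c ≠ j) (hd1 : d ≠ i) (hd2 : d ≠ j) :
    (SS : (A × A) →ₗ[ℚ] (A × A)) * D.gen i j (c, d) = D.gen i j (c, d) * SS := by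
  refine LinearMap.ext fun m => ?_
  simp [Module.End.mul_apply, D.CC_far hc1 hc2 hd1 hd2, D.TT_far hc1 hc2 hd1 hd2]

theorem rho_comm (hij : i ≠ j) {a b c d : Fin n} (h1 : a ≠ b) (h2 : a ≠ c) (h3 : a ≠ d)
    (h4 : b ≠ c) (h5 : b ≠ d) (h6 : c ≠ d) :
    D.rho i j (a, b) * D.rho i j (c, d) = D.rho i j (c, d) * D.rho i j (a, b) := by
  by_cases he1 : (a, b) = (i, j)
  · injection he1 with ha hb
    have hc1 : c ≠ i := fun h => h2 (by rw [ha, h])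
    have hc2 : c ≠ j := fun h => h4 (by rw [hb, h])
    have hd1 : d ≠ i := fun h => h3 (by rw [ha, h])
    have hd2 : d ≠ j := fun h => h5 (by rw [hb, h])
    rw [ha, hb, D.rho_e, D.rho_gen (by simp [Prod.ext_iff, hc1]) (by simp [Prod.ext_iff, hc2])]
    exact D.SGfar hc1 hc2 hd1 hd2
  · by_cases he2 : (a, b) = (j, i)
    · injection he2 with ha hb
      have hc1 : c ≠ i := fun h => h4 (by rw [hb, h])
      have hc2 : c ≠ j := fun h => h2 (by rw [ha, h])
      have hd1 : d ≠ i := fun h => h5 (by rw [hb, h])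
      have hd2 : d ≠ j := fun h => h3 (by rw [ha, h])
      rw [ha, hb, D.rho_e' hij,
        D.rho_gen (by simp [Prod.ext_iff, hc1]) (by simp [Prod.ext_iff, hc2])]
      have key := D.SGfar (i := i) (j := j) hc1 hc2 hd1 hd2
      refine LinearMap.ext fun m => ?_
      have hm := DFunLike.congr_fun key m
      simp only [Module.End.mul_apply] at hm
      simp only [Module.End.mul_apply, LinearMap.neg_apply, map_neg, hm]
    · by_cases he3 : (c, d) = (i, j)
      · injection he3 with hc hd
        have ha1 : a ≠ i := fun h => h2 (by rw [hc, h])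
        have ha2 : a ≠ j := fun h => h3 (by rw [hd, h])
        have hb1 : b ≠ i := fun h => h4 (by rw [hc, h])
        have hb2 : b ≠ j := fun h => h5 (by rw [hd, h])
        rw [hc, hd, D.rho_e,
          D.rho_gen (by simp [Prod.ext_iff, ha1]) (by simp [Prod.ext_iff, ha2])]
        exact (D.SGfar ha1 ha2 hb1 hb2).symm
      · by_cases he4 : (c, d) = (j, i)
        · injection he4 with hc hd
          have ha1 : a ≠ i := fun h => h3 (by rw [hd, h])
          have ha2 : a ≠ j := fun h => h2 (by rw [hc, h])
          have hb1 : b ≠ i := fun h => h5 (by rw [hd, h])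
          have hb2 : b ≠ j := fun h => h4 (by rw [hc, h])
          rw [hc, hd, D.rho_e' hij,
            D.rho_gen (by simp [Prod.ext_iff, ha1]) (by simp [Prod.ext_iff, ha2])]
          have key := D.SGfar (i := i) (j := j) ha1 ha2 hb1 hb2
          refine LinearMap.ext fun m => ?_
          have hm := DFunLike.congr_fun key m
          simp only [Module.End.mul_apply] at hm
          simp only [Module.End.mul_apply, LinearMap.neg_apply, map_neg, hm]
        · rw [D.rho_gen he1 he2, D.rho_gen he3 he4]
          exact D.genComm hij h1 h2 h3 h4 h5 h6

end Comm
section Cyclic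

/-- IDENTITY-A: the cross-term identity for the cyclic relation with one special vertex. -/
theorem identA (hij : i ≠ j) {c d : Fin n} (hc1 : c ≠ i) (hc2 : c ≠ j)
    (hd1 : d ≠ i) (hd2 : d ≠ j) (hcd : c ≠ d) :
    D.X (c, d) * (D.X (d, j) * D.X (d, i)) + D.X (d, i) * (-(D.X (j, c) * D.X (i, c)))
      + D.X (d, j) * D.X (d, i) * D.X (j, c) + -(D.X (j, c) * D.X (i, c)) * D.X (c, d)
      = 0 := by
  have h2 := D.cyc d i c hd1 (Ne.symm hcd) (Ne.symm hc1)
  rw [D.anti c i] at h2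
  have h4 := D.cyc d j c hd2 (Ne.symm hcd) (Ne.symm hc2)
  rw [D.anti c j] at h4
  have h6 := D.cyc j c i (Ne.symm hc2) (Ne.symm hij) hc1
  rw [D.anti c j] at h6
  have h8 := D.cyc j d i (Ne.symm hd2) (Ne.symm hij) hd1
  rw [D.anti d j] at h8
  have hHW := D.comm c d i j hcd hc1 hc2 hd1 hd2 hij
  rw [D.anti c j, D.anti c i]
  linear_combination (norm := noncomm_ring)
    -(D.X (c, d) * h8) + D.X (d, i) * h6 + h8 * D.X (c, j) + h6 * D.X (c, d)
      + D.X (c, i) * hHW + h2 * D.X (i, j) - hHW * D.X (d, j) - D.X (i, j) * h4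

theorem cycY0 {a b c : Fin n} (ha1 : a ≠ i) (ha2 : a ≠ j) (hb1 : b ≠ i) (hb2 : b ≠ j)
    (hc1 : c ≠ i) (hc2 : c ≠ j) (hab : a ≠ b) (hac : a ≠ c) (hbc : b ≠ c) :
    D.gen i j (a, b) * D.gen i j (b, c) + D.gen i j (b, c) * D.gen i j (c, a)
      + D.gen i j (c, a) * D.gen i j (a, b) = 0 := by
  refine LinearMap.ext fun m => ?_
  simp only [LinearMap.add_apply, Module.End.mul_apply, gen_apply, LinearMap.zero_apply,
    D.CC_far ha1 ha2 hb1 hb2, D.CC_far hb1 hb2 hc1 hc2, D.CC_far hc1 hc2 ha1 ha2,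
    D.TT_far ha1 ha2 hb1 hb2, D.TT_far hb1 hb2 hc1 hc2, D.TT_far hc1 hc2 ha1 ha2,
    zero_mul, mul_zero, add_zero, Prod.mk_add_mk, ← Prod.mk_zero_zero, Prod.mk.injEq]
  have h := D.cyc a b c hab hac hbc
  constructor
  · linear_combination (norm := noncomm_ring) h * m.1
  · linear_combination (norm := noncomm_ring) h * m.2

theorem cycY1i (hij : i ≠ j) {c d : Fin n} (hc1 : c ≠ i) (hc2 : c ≠ j)
    (hd1 : d ≠ i) (hd2 : d ≠ j) (hcd : c ≠ d) :
    D.gen i j (c, d) * D.gen i j (d, i) + D.gen i j (d, i) * D.gen i j (i, c)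
      + D.gen i j (i, c) * D.gen i j (c, d) = 0 := by
  refine LinearMap.ext fun m => ?_
  simp only [LinearMap.add_apply, Module.End.mul_apply, gen_apply, LinearMap.zero_apply,
    D.CC_far hc1 hc2 hd1 hd2, D.TT_far hc1 hc2 hd1 hd2,
    D.CC_ci hd1 hd2, D.TT_ci hd1 hd2, D.CC_ic hij hc1 hc2, D.TT_ic hc1 hc2,
    zero_mul, mul_zero, add_zero, Prod.mk_add_mk, ← Prod.mk_zero_zero, Prod.mk.injEq]
  constructor
  · linear_combination (norm := noncomm_ring)
      (D.cyc c d i hcd hc1 hd1) * m.1 + (D.identA hij hc1 hc2 hd1 hd2 hcd) * m.2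
  · linear_combination (norm := noncomm_ring) (D.cyc c d j hcd hc2 hd2) * m.2

theorem cycY1j (hij : i ≠ j) {c d : Fin n} (hc1 : c ≠ i) (hc2 : c ≠ j)
    (hd1 : d ≠ i) (hd2 : d ≠ j) (hcd : c ≠ d) :
    D.gen i j (c, d) * D.gen i j (d, j) + D.gen i j (d, j) * D.gen i j (j, c)
      + D.gen i j (j, c) * D.gen i j (c, d) = 0 := by
  refine LinearMap.ext fun m => ?_
  simp only [LinearMap.add_apply, Module.End.mul_apply, gen_apply, LinearMap.zero_apply,
    D.CC_far hc1 hc2 hd1 hd2, D.TT_far hc1 hc2 hd1 hd2,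
    D.CC_cj hij hd1 hd2, D.TT_cj hd1 hd2, D.CC_jc hc1 hc2, D.TT_jc hc1 hc2,
    zero_mul, mul_zero, add_zero, Prod.mk_add_mk, ← Prod.mk_zero_zero, Prod.mk.injEq]
  constructor
  · linear_combination (norm := noncomm_ring)
      (D.cyc c d j hcd hc2 hd2) * m.1
        - (D.identA (i := j) (j := i) hij.symm hc2 hc1 hd2 hd1 hcd) * m.2
  · linear_combination (norm := noncomm_ring) (D.cyc c d i hcd hc1 hd1) * m.2

theorem cycY2 (hij : i ≠ j) {c : Fin n} (hc1 : c ≠ i) (hc2 : c ≠ j) :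
    (SS : (A × A) →ₗ[ℚ] (A × A)) * D.gen i j (j, c) + D.gen i j (j, c) * D.gen i j (c, i)
      + D.gen i j (c, i) * SS = 0 := by
  have hanti := D.anti c j
  refine LinearMap.ext fun m => ?_
  simp only [LinearMap.add_apply, Module.End.mul_apply, gen_apply, SS_apply,
    LinearMap.zero_apply, D.CC_jc hc1 hc2, D.TT_jc hc1 hc2, D.CC_ci hc1 hc2,
    D.TT_ci hc1 hc2, zero_mul, mul_zero, add_zero, zero_add, Prod.mk_add_mk,
    ← Prod.mk_zero_zero, Prod.mk.injEq]
  constructor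
  · linear_combination (norm := noncomm_ring)
      hanti * (D.X (c, i) * m.1) + hanti * (D.X (c, j) * (D.X (c, i) * m.2))
        - (D.sq c j) * (D.X (c, i) * m.2) + D.X (i, c) * hanti * (D.X (c, j) * m.2)
        - D.X (i, c) * (D.sq c j) * m.2
  · linear_combination (norm := noncomm_ring) hanti * m.1 + D.X (i, c) * hanti * m.2

theorem cycY2' (hij : i ≠ j) {c : Fin n} (hc1 : c ≠ i) (hc2 : c ≠ j) :
    (-SS : (A × A) →ₗ[ℚ] (A × A)) * D.gen i j (i, c) + D.gen i j (i, c) * D.gen i j (c, j)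
      + D.gen i j (c, j) * (-SS) = 0 := by
  have hanti := D.anti c i
  refine LinearMap.ext fun m => ?_
  simp only [LinearMap.add_apply, Module.End.mul_apply, gen_apply, SS_apply,
    LinearMap.neg_apply, map_neg, LinearMap.zero_apply, D.CC_ic hij hc1 hc2,
    D.TT_ic hc1 hc2, D.CC_cj hij hc1 hc2, D.TT_cj hc1 hc2, zero_mul, mul_zero, add_zero,
    zero_add, Prod.mk_add_mk, Prod.neg_mk, neg_zero, ← Prod.mk_zero_zero, Prod.mk.injEq]
  constructor
  · linear_combination (norm := noncomm_ring)
      hanti * (D.X (c, j) * m.1) - hanti * (D.X (c, i) * (D.X (c, j) * m.2))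
        + (D.sq c i) * (D.X (c, j) * m.2) - D.X (j, c) * hanti * (D.X (c, i) * m.2)
        + D.X (j, c) * (D.sq c i) * m.2
  · linear_combination (norm := noncomm_ring) -(hanti * m.1) + D.X (j, c) * hanti * m.2

end Cyclic
section CyclicMain

theorem rho_cyc (hij : i ≠ j) {a b c : Fin n} (hab : a ≠ b) (hac : a ≠ c) (hbc : b ≠ c) :
    D.rho i j (a, b) * D.rho i j (b, c) + D.rho i j (b, c) * D.rho i j (c, a)
      + D.rho i j (c, a) * D.rho i j (a, b) = 0 := by
  by_cases ha1 : a = i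
  · rw [ha1] at hab hac ⊢
    by_cases hb2 : b = j
    · -- (i, j, c)
      rw [hb2] at hbc ⊢
      have hc1 : c ≠ i := Ne.symm hac
      have hc2 : c ≠ j := Ne.symm hbc
      rw [D.rho_e,
        D.rho_gen (show (j,c) ≠ (i,j) by simp [Prod.ext_iff, Ne.symm hij])
          (show (j,c) ≠ (j,i) by simp [Prod.ext_iff, hc1]),
        D.rho_gen (show (c,i) ≠ (i,j) by simp [Prod.ext_iff, hc1])
          (show (c,i) ≠ (j,i) by simp [Prod.ext_iff, hc2])]
      exact D.cycY2 hij hc1 hc2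
    · by_cases hc2 : c = j
      · -- (i, b, j) → rotate twice → (j, i, b)
        rw [hc2] at hbc ⊢
        have hb1 : b ≠ i := Ne.symm hab
        rw [add_rotate, add_rotate, D.rho_e' hij,
          D.rho_gen (show (i,b) ≠ (i,j) by simp [Prod.ext_iff, hb2])
            (show (i,b) ≠ (j,i) by simp [Prod.ext_iff, hij]),
          D.rho_gen (show (b,j) ≠ (i,j) by simp [Prod.ext_iff, hb1])
            (show (b,j) ≠ (j,i) by simp [Prod.ext_iff, hb2])]
        exact D.cycY2' hij hb1 hbc
      · -- (i, b, c) → rotate once → (b, c, i)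
        have hb1 : b ≠ i := Ne.symm hab
        have hc1 : c ≠ i := Ne.symm hac
        rw [add_rotate,
          D.rho_gen (show (b,c) ≠ (i,j) by simp [Prod.ext_iff, hb1])
            (show (b,c) ≠ (j,i) by simp [Prod.ext_iff, hb2]),
          D.rho_gen (show (c,i) ≠ (i,j) by simp [Prod.ext_iff, hc1])
            (show (c,i) ≠ (j,i) by simp [Prod.ext_iff, hc2]),
          D.rho_gen (show (i,b) ≠ (i,j) by simp [Prod.ext_iff, hb2])
            (show (i,b) ≠ (j,i) by simp [Prod.ext_iff, hij])]
        exact D.cycY1i hij hb1 hb2 hc1 hc2 hbc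
  · by_cases ha2 : a = j
    · rw [ha2] at hab hac ⊢
      by_cases hb1 : b = i
      · -- (j, i, c)
        rw [hb1] at hbc ⊢
        have hc1 : c ≠ i := Ne.symm hbc
        have hc2 : c ≠ j := Ne.symm hac
        rw [D.rho_e' hij,
          D.rho_gen (show (i,c) ≠ (i,j) by simp [Prod.ext_iff, hc2])
            (show (i,c) ≠ (j,i) by simp [Prod.ext_iff, hij]),
          D.rho_gen (show (c,j) ≠ (i,j) by simp [Prod.ext_iff, hc1])
            (show (c,j) ≠ (j,i) by simp [Prod.ext_iff, hc2])]
        exact D.cycY2' hij hc1 hc2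
      · by_cases hc1 : c = i
        · -- (j, b, i) → rotate twice → (i, j, b)
          rw [hc1] at hbc ⊢
          have hb2 : b ≠ j := Ne.symm hab
          rw [add_rotate, add_rotate, D.rho_e,
            D.rho_gen (show (j,b) ≠ (i,j) by simp [Prod.ext_iff, Ne.symm hij])
              (show (j,b) ≠ (j,i) by simp [Prod.ext_iff, hbc]),
            D.rho_gen (show (b,i) ≠ (i,j) by simp [Prod.ext_iff, hbc])
              (show (b,i) ≠ (j,i) by simp [Prod.ext_iff, hb2])]
          exact D.cycY2 hij hbc hb2
        · -- (j, b, c) → rotate once → (b, c, j)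
          have hb2 : b ≠ j := Ne.symm hab
          have hc2 : c ≠ j := Ne.symm hac
          rw [add_rotate,
            D.rho_gen (show (b,c) ≠ (i,j) by simp [Prod.ext_iff, hb1])
              (show (b,c) ≠ (j,i) by simp [Prod.ext_iff, hb2]),
            D.rho_gen (show (c,j) ≠ (i,j) by simp [Prod.ext_iff, hc1])
              (show (c,j) ≠ (j,i) by simp [Prod.ext_iff, hc2]),
            D.rho_gen (show (j,b) ≠ (i,j) by simp [Prod.ext_iff, Ne.symm hij])
              (show (j,b) ≠ (j,i) by simp [Prod.ext_iff, hb1])]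
          exact D.cycY1j hij hb1 hb2 hc1 hc2 hbc
    · by_cases hb1 : b = i
      · rw [hb1] at hab hbc ⊢
        by_cases hc2 : c = j
        · -- (a, i, j) → rotate once → (i, j, a)
          rw [hc2] at hac ⊢
          rw [add_rotate, D.rho_e,
            D.rho_gen (show (j,a) ≠ (i,j) by simp [Prod.ext_iff, Ne.symm hij])
              (show (j,a) ≠ (j,i) by simp [Prod.ext_iff, ha1]),
            D.rho_gen (show (a,i) ≠ (i,j) by simp [Prod.ext_iff, ha1])
              (show (a,i) ≠ (j,i) by simp [Prod.ext_iff, ha2])]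
          exact D.cycY2 hij ha1 ha2
        · -- (a, i, c) → rotate twice → (c, a, i)
          have hc1 : c ≠ i := Ne.symm hbc
          rw [add_rotate, add_rotate,
            D.rho_gen (show (c,a) ≠ (i,j) by simp [Prod.ext_iff, hc1])
              (show (c,a) ≠ (j,i) by simp [Prod.ext_iff, hc2]),
            D.rho_gen (show (a,i) ≠ (i,j) by simp [Prod.ext_iff, ha1])
              (show (a,i) ≠ (j,i) by simp [Prod.ext_iff, ha2]),
            D.rho_gen (show (i,c) ≠ (i,j) by simp [Prod.ext_iff, hc2])
              (show (i,c) ≠ (j,i) by simp [Prod.ext_iff, hij])]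
          exact D.cycY1i hij hc1 hc2 ha1 ha2 (Ne.symm hac)
      · by_cases hb2 : b = j
        · rw [hb2] at hab hbc ⊢
          by_cases hc1 : c = i
          · -- (a, j, i) → rotate once → (j, i, a)
            rw [hc1] at hac ⊢
            rw [add_rotate, D.rho_e' hij,
              D.rho_gen (show (i,a) ≠ (i,j) by simp [Prod.ext_iff, ha2])
                (show (i,a) ≠ (j,i) by simp [Prod.ext_iff, hij]),
              D.rho_gen (show (a,j) ≠ (i,j) by simp [Prod.ext_iff, ha1])
                (show (a,j) ≠ (j,i) by simp [Prod.ext_iff, ha2])]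
            exact D.cycY2' hij ha1 ha2
          · -- (a, j, c) → rotate twice → (c, a, j)
            have hc2 : c ≠ j := Ne.symm hbc
            rw [add_rotate, add_rotate,
              D.rho_gen (show (c,a) ≠ (i,j) by simp [Prod.ext_iff, hc1])
                (show (c,a) ≠ (j,i) by simp [Prod.ext_iff, hc2]),
              D.rho_gen (show (a,j) ≠ (i,j) by simp [Prod.ext_iff, ha1])
                (show (a,j) ≠ (j,i) by simp [Prod.ext_iff, ha2]),
              D.rho_gen (show (j,c) ≠ (i,j) by simp [Prod.ext_iff, Ne.symm hij])
                (show (j,c) ≠ (j,i) by simp [Prod.ext_iff, hc1])]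
            exact D.cycY1j hij hc1 hc2 ha1 ha2 (Ne.symm hac)
        · by_cases hc1 : c = i
          · -- (a, b, i) → direct cycY1i
            rw [hc1] at hac hbc ⊢
            rw [D.rho_gen (show (a,b) ≠ (i,j) by simp [Prod.ext_iff, ha1])
                (show (a,b) ≠ (j,i) by simp [Prod.ext_iff, ha2]),
              D.rho_gen (show (b,i) ≠ (i,j) by simp [Prod.ext_iff, hb1])
                (show (b,i) ≠ (j,i) by simp [Prod.ext_iff, hb2]),
              D.rho_gen (show (i,a) ≠ (i,j) by simp [Prod.ext_iff, ha2])
                (show (i,a) ≠ (j,i) by simp [Prod.ext_iff, hij])]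
            exact D.cycY1i hij ha1 ha2 hb1 hb2 hab
          · by_cases hc2 : c = j
            · -- (a, b, j) → direct cycY1j
              rw [hc2] at hac hbc ⊢
              rw [D.rho_gen (show (a,b) ≠ (i,j) by simp [Prod.ext_iff, ha1])
                  (show (a,b) ≠ (j,i) by simp [Prod.ext_iff, ha2]),
                D.rho_gen (show (b,j) ≠ (i,j) by simp [Prod.ext_iff, hb1])
                  (show (b,j) ≠ (j,i) by simp [Prod.ext_iff, hb2]),
                D.rho_gen (show (j,a) ≠ (i,j) by simp [Prod.ext_iff, Ne.symm hij])
                  (show (j,a) ≠ (j,i) by simp [Prod.ext_iff, ha1])]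
              exact D.cycY1j hij ha1 ha2 hb1 hb2 hab
            · -- far
              rw [D.rho_gen (show (a,b) ≠ (i,j) by simp [Prod.ext_iff, ha1])
                  (show (a,b) ≠ (j,i) by simp [Prod.ext_iff, ha2]),
                D.rho_gen (show (b,c) ≠ (i,j) by simp [Prod.ext_iff, hb1])
                  (show (b,c) ≠ (j,i) by simp [Prod.ext_iff, hb2]),
                D.rho_gen (show (c,a) ≠ (i,j) by simp [Prod.ext_iff, hc1])
                  (show (c,a) ≠ (j,i) by simp [Prod.ext_iff, hc2])]
              exact D.cycY0 ha1 ha2 hb1 hb2 hc1 hc2 hab hac hbc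

end CyclicMain

theorem rho_diag (hij : i ≠ j) (m : Fin n) : D.rho i j (m, m) = 0 := by
  rw [D.rho_gen (by simp [Prod.ext_iff]; intro h1 h2; exact hij (h1.symm.trans h2))
    (by simp [Prod.ext_iff]; intro h1 h2; exact hij (h2.symm.trans h1))]
  refine LinearMap.ext fun v => ?_
  have hTT : D.TT i j (m, m) = 0 := D.X_diag' rfl
  have hCC : D.CC i j (m, m) = 0 := by
    unfold CC
    rw [D.diag m, mul_zero]
    split <;> simp
  simp [hTT, hCC, D.diag m]

theorem gen_s0 (p : Fin n × Fin n) (s : A) : D.gen i j p (s, 0) = (D.X p * s, 0) := by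
  simp

theorem cyc_rev {a b c : Fin n} (hab : a ≠ b) (hac : a ≠ c) (hbc : b ≠ c) :
    D.X (b, c) * D.X (a, b) + D.X (c, a) * D.X (b, c) + D.X (a, b) * D.X (c, a) = 0 := by
  have h := D.cyc c b a (Ne.symm hbc) (Ne.symm hac) (Ne.symm hab)
  rw [D.anti b c, D.anti a b, D.anti c a] at h
  linear_combination (norm := noncomm_ring) h

end FKX

variable {n : ℕ}

theorem x_diag (m : Fin n) : x n m m = 0 := by
  have := RingQuot.mkAlgHom_rel ℚ (Rel.diag m)
  simpa [x] using this

theorem x_anti (k l : Fin n) : x n l k = -(x n k l) := by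
  by_cases h : k = l
  · subst h; simp [x_diag]
  · have := RingQuot.mkAlgHom_rel ℚ (Rel.antisymm k l h)
    simpa [x] using this

theorem x_sq (k l : Fin n) : x n k l * x n k l = 0 := by
  by_cases h : k = l
  · subst h; simp [x_diag]
  · have := RingQuot.mkAlgHom_rel ℚ (Rel.square k l h)
    simpa [x] using this

theorem x_comm (k l m o : Fin n) (h1 : k ≠ l) (h2 : k ≠ m) (h3 : k ≠ o)
    (h4 : l ≠ m) (h5 : l ≠ o) (h6 : m ≠ o) :
    x n k l * x n m o = x n m o * x n k l := by
  have hnd : List.Nodup [k, l, m, o] := by simp [h1, h2, h3, h4, h5, h6]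
  have := RingQuot.mkAlgHom_rel ℚ (Rel.comm k l m o hnd)
  simpa [x] using this

theorem x_cyc (a b c : Fin n) (h1 : a ≠ b) (h2 : a ≠ c) (h3 : b ≠ c) :
    x n a b * x n b c + x n b c * x n c a + x n c a * x n a b = 0 := by
  have hnd : List.Nodup [a, b, c] := by simp [h1, h2, h3]
  have := RingQuot.mkAlgHom_rel ℚ (Rel.cyclic a b c hnd)
  simpa [x] using this

/-- The Fomin–Kirillov data in `E n` itself. -/
noncomputable def DE (n : ℕ) : FKX (E n) n where
  X p := x n p.1 p.2
  diag m := x_diag m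
  anti k l := x_anti k l
  sq k l := x_sq k l
  comm := x_comm
  cyc := x_cyc

theorem relCompat (i j : Fin n) (hij : i ≠ j) :
    ∀ ⦃a b⦄, Rel n a b →
      FreeAlgebra.lift ℚ ((DE n).rho i j) a = FreeAlgebra.lift ℚ ((DE n).rho i j) b := by
  intro a b r
  induction r with
  | diag m =>
      simp only [FreeAlgebra.lift_ι_apply, map_zero]
      exact (DE n).rho_diag hij m
  | antisymm k l hkl =>
      simp only [FreeAlgebra.lift_ι_apply, map_neg]
      exact (DE n).rho_flip hij k l
  | square k l hkl =>
      simp only [map_mul, FreeAlgebra.lift_ι_apply, map_zero]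
      exact (DE n).rho_sq hij hkl
  | comm k l m o h =>
      have h1 : k ≠ l := by rintro rfl; simp at h
      have h2 : k ≠ m := by rintro rfl; simp at h
      have h3 : k ≠ o := by rintro rfl; simp at h
      have h4 : l ≠ m := by rintro rfl; simp at h
      have h5 : l ≠ o := by rintro rfl; simp at h
      have h6 : m ≠ o := by rintro rfl; simp at h
      simp only [map_mul, FreeAlgebra.lift_ι_apply]
      exact (DE n).rho_comm hij h1 h2 h3 h4 h5 h6
  | cyclic k l m h =>
      have h1 : k ≠ l := by rintro rfl; simp at h
      have h2 : k ≠ m := by rintro rfl; simp at h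
      have h3 : l ≠ m := by rintro rfl; simp at h
      simp only [map_add, map_mul, FreeAlgebra.lift_ι_apply, map_zero]
      exact (DE n).rho_cyc hij h1 h2 h3

/-- The representation of `E n` on `E n × E n` attached to the pair `(i, j)`. -/
noncomputable def rep (n : ℕ) (i j : Fin n) (hij : i ≠ j) :
    E n →ₐ[ℚ] Module.End ℚ (E n × E n) :=
  RingQuot.liftAlgHom ℚ ⟨FreeAlgebra.lift ℚ ((DE n).rho i j), relCompat i j hij⟩

theorem rep_x (i j : Fin n) (hij : i ≠ j) (k l : Fin n) :
    rep n i j hij (x n k l) = (DE n).rho i j (k, l) := by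
  simp only [rep, x, RingQuot.liftAlgHom_mkAlgHom_apply, FreeAlgebra.lift_ι_apply]

theorem key (n : ℕ) (G : SimpleGraph (Fin n)) (i j : Fin n) (hij : i ≠ j)
    (hG : ¬G.Adj i j) {w : E n} (hw : w ∈ EG n G) :
    ∀ s : E n, rep n i j hij w (s, 0) = (w * s, 0) := by
  refine Algebra.adjoin_induction (fun y hy => ?_) (fun r => ?_)
    (fun u v hu hv ihu ihv => ?_) (fun u v hu hv ihu ihv => ?_) hw
  · obtain ⟨k, l, hkl, rfl⟩ := hy
    intro s
    have hne1 : (k, l) ≠ (i, j) := by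
      intro h; injection h with hk hl; rw [hk, hl] at hkl; exact hG hkl
    have hne2 : (k, l) ≠ (j, i) := by
      intro h; injection h with hk hl; rw [hk, hl] at hkl; exact hG hkl.symm
    rw [rep_x, (DE n).rho_gen hne1 hne2, (DE n).gen_s0]
    rfl
  · intro s
    rw [AlgHom.commutes, Module.algebraMap_end_apply]
    exact Prod.ext_iff.mpr ⟨Algebra.smul_def r s, smul_zero r⟩
  · intro s
    have h1 : rep n i j hij (u + v) (s, 0)
        = rep n i j hij u (s, 0) + rep n i j hij v (s, 0) := by rw [map_add]; rfl
    rw [h1, ihu s, ihv s]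
    exact Prod.ext_iff.mpr ⟨(add_mul u v s).symm, add_zero 0⟩
  · intro s
    have h1 : rep n i j hij (u * v) (s, 0)
        = rep n i j hij u (rep n i j hij v (s, 0)) := by rw [map_mul]; rfl
    rw [h1, ihv s, ihu (v * s)]
    exact Prod.ext_iff.mpr ⟨(mul_assoc u v s).symm, rfl⟩

/-- Main lemma: if `{i,j}` is not an edge of `G`, then left multiplication by `x_{ij}`
is injective on `E_G`. -/
theorem left_cancel (n : ℕ) (G : SimpleGraph (Fin n)) (i j : Fin n) (hij : i ≠ j)
    (hG : ¬G.Adj i j) {w : E n} (hw : w ∈ EG n G) (h0 : x n i j * w = 0) : w = 0 := by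
  have hkey := key n G i j hij hG hw 1
  have h1 : rep n i j hij (x n i j * w) (1, 0) = (0, w * 1) := by
    have hm : rep n i j hij (x n i j * w) (1, 0)
        = rep n i j hij (x n i j) (rep n i j hij w (1, 0)) := by rw [map_mul]; rfl
    rw [hm, hkey, rep_x, (DE n).rho_e, SS_apply]
  rw [h0, map_zero, LinearMap.zero_apply] at h1
  have h3 := congrArg Prod.snd h1
  exact (mul_one w).symm.trans h3.symm

theorem relCompatOp :
    ∀ ⦃a b⦄, Rel n a b →
      FreeAlgebra.lift ℚ (fun p : Fin n × Fin n => MulOpposite.op (x n p.1 p.2)) a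
        = FreeAlgebra.lift ℚ (fun p : Fin n × Fin n => MulOpposite.op (x n p.1 p.2)) b := by
  intro a b r
  induction r with
  | diag m =>
      simp only [FreeAlgebra.lift_ι_apply, map_zero]
      simp [x_diag]
  | antisymm k l hkl =>
      simp only [FreeAlgebra.lift_ι_apply, map_neg]
      rw [x_anti k l]
      simp
  | square k l hkl =>
      simp only [map_mul, FreeAlgebra.lift_ι_apply, map_zero]
      apply MulOpposite.unop_injective
      simp only [MulOpposite.unop_mul, MulOpposite.unop_op, MulOpposite.unop_zero]
      exact x_sq k l
  | comm k l m o h =>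
      have h1 : k ≠ l := by rintro rfl; simp at h
      have h2 : k ≠ m := by rintro rfl; simp at h
      have h3 : k ≠ o := by rintro rfl; simp at h
      have h4 : l ≠ m := by rintro rfl; simp at h
      have h5 : l ≠ o := by rintro rfl; simp at h
      have h6 : m ≠ o := by rintro rfl; simp at h
      simp only [map_mul, FreeAlgebra.lift_ι_apply]
      apply MulOpposite.unop_injective
      simp only [MulOpposite.unop_mul, MulOpposite.unop_op]
      exact (x_comm k l m o h1 h2 h3 h4 h5 h6).symm
  | cyclic k l m h =>
      have h1 : k ≠ l := by rintro rfl; simp at h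
      have h2 : k ≠ m := by rintro rfl; simp at h
      have h3 : l ≠ m := by rintro rfl; simp at h
      simp only [map_add, map_mul, FreeAlgebra.lift_ι_apply, map_zero]
      apply MulOpposite.unop_injective
      simp only [MulOpposite.unop_add, MulOpposite.unop_mul, MulOpposite.unop_op,
        MulOpposite.unop_zero]
      exact (DE n).cyc_rev h1 h2 h3

/-- The order-reversing map into the opposite algebra. -/
noncomputable def gop (n : ℕ) : E n →ₐ[ℚ] (E n)ᵐᵒᵖ :=
  RingQuot.liftAlgHom ℚ
    ⟨FreeAlgebra.lift ℚ (fun p : Fin n × Fin n => MulOpposite.op (x n p.1 p.2)), relCompatOp⟩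

/-- The anti-automorphism of `E n` fixing the generators. -/
noncomputable def tau (u : E n) : E n := (gop n u).unop

theorem tau_x (k l : Fin n) : tau (x n k l) = x n k l := by
  simp only [tau, gop, x, RingQuot.liftAlgHom_mkAlgHom_apply, FreeAlgebra.lift_ι_apply,
    MulOpposite.unop_op]

theorem tau_mul (u v : E n) : tau (u * v) = tau v * tau u := by
  simp only [tau, map_mul, MulOpposite.unop_mul]

theorem tau_add (u v : E n) : tau (u + v) = tau u + tau v := by
  simp only [tau, map_add, MulOpposite.unop_add]

theorem tau_algebraMap (r : ℚ) : tau (algebraMap ℚ (E n) r) = algebraMap ℚ (E n) r := by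
  simp only [tau, AlgHom.commutes, MulOpposite.algebraMap_apply, MulOpposite.unop_op]

theorem tau_zero : tau (0 : E n) = 0 := by
  simp [tau]

theorem tau_tau (u : E n) : tau (tau u) = u := by
  obtain ⟨y, rfl⟩ := RingQuot.mkAlgHom_surjective ℚ (Rel n) u
  induction y using FreeAlgebra.induction with
  | grade0 r =>
      rw [AlgHom.commutes, tau_algebraMap, tau_algebraMap]
  | grade1 p =>
      have hp : RingQuot.mkAlgHom ℚ (Rel n) (FreeAlgebra.ι ℚ p) = x n p.1 p.2 := rfl
      rw [hp, tau_x, tau_x]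
  | mul a b iha ihb =>
      rw [map_mul, tau_mul, tau_mul, iha, ihb]
  | add a b iha ihb =>
      rw [map_add, tau_add, tau_add, iha, ihb]

theorem tau_mem {G : SimpleGraph (Fin n)} {w : E n} (hw : w ∈ EG n G) : tau w ∈ EG n G := by
  refine Algebra.adjoin_induction (fun y hy => ?_) (fun r => ?_)
    (fun u v _ _ ihu ihv => ?_) (fun u v _ _ ihu ihv => ?_) hw
  · obtain ⟨k, l, hkl, rfl⟩ := hy
    rw [tau_x]
    exact Algebra.subset_adjoin ⟨k, l, hkl, rfl⟩
  · rw [tau_algebraMap]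
    exact Subalgebra.algebraMap_mem _ r
  · rw [tau_add]
    exact add_mem ihu ihv
  · rw [tau_mul]
    exact mul_mem ihv ihu

end Stmt15

/-- the left and right descent sets of a nonzero element of `E_G` are
contained in `G`: if `w ∈ E_G` is nonzero and `x_{ij}·w = 0` (or `w·x_{ij} = 0`) for some
`i < j`, then `{i,j}` is an edge of `G`. -/
theorem stmt15 (n : ℕ) (hn : 1 ≤ n) (G : SimpleGraph (Fin n))
    (w : E n) (hw : w ∈ EG n G) (hw0 : w ≠ 0) (i j : Fin n) (hij : i < j) :
    (x n i j * w = 0 → G.Adj i j) ∧ (w * x n i j = 0 → G.Adj i j) := by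
  by_cases hadj : G.Adj i j
  · exact ⟨fun _ => hadj, fun _ => hadj⟩
  · have hij' : i ≠ j := Fin.ne_of_lt hij
    refine ⟨fun h0 => absurd (Stmt15.left_cancel n G i j hij' hadj hw h0) hw0, fun h0 => ?_⟩
    have h1 : x n i j * Stmt15.tau w = 0 := by
      have h2 := congrArg Stmt15.tau h0
      rw [Stmt15.tau_mul, Stmt15.tau_x, Stmt15.tau_zero] at h2
      exact h2
    have h3 := Stmt15.left_cancel n G i j hij' hadj (Stmt15.tau_mem hw) h1
    have h4 := Stmt15.tau_tau w
    rw [h3, Stmt15.tau_zero] at h4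
    exact absurd h4.symm hw0

end FK
end
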